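/- arXiv:2103.07837 — 2 statements merged into one kernel-verified Lean document; each statement's English description precedes it below -/
import Mathlib

section
/- Under assumption (B_p), there exists ε > 0 such that for every t ∈ (1,1+ε]: y_-(t,·) is an increasing bijection from (−∞, x_-(t)] onto (−∞, η_-(t)]; y_0(t,·) is a decreasing bijection from [x_+(t), x_-(t)] onto [η_-(t), η_+(t)]; y_+(t,·) is an increasing bijection from [x_+(t), +∞) onto [η_+(t), +∞). Moreover y_m ∈ C^∞(Ω_m) ∩ C(closure of Ω_m) for m ∈ {−, 0, +}, where Ω_- = {(t,x) : 1 < t < 1+ε, x < x_-(t)}, Ω_+ = {(t,x) : 1 < t < 1+ε, x > x_+(t)}, Ω_0 = {(t,x) : 1 < t < 1+ε, x_+(t) < x < x_-(t)}. -/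
open Real Filter Topology Set Asymptotics

section St13Aux

/-- Shear equivalence `(s,u) ↦ (s, a s + c u)` for `c ≠ 0`. -/
noncomputable def st13shear (a c : ℝ) (hc : c ≠ 0) : (ℝ × ℝ) ≃L[ℝ] (ℝ × ℝ) :=
  LinearEquiv.toContinuousLinearEquiv
  { toFun := fun q => (q.1, a * q.1 + c * q.2)
    invFun := fun q => (q.1, (q.2 - a * q.1) / c)
    map_add' := by intro q r; simp [Prod.ext_iff]; ring
    map_smul' := by intro m q; simp [Prod.ext_iff]; ring
    left_inv := by intro q; simp [Prod.ext_iff]; field_simp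
    right_inv := by intro q; simp [Prod.ext_iff]; field_simp; ring }

lemma st13shear_apply (a c : ℝ) (hc : c ≠ 0) (v : ℝ × ℝ) :
    (st13shear a c hc : (ℝ × ℝ) →L[ℝ] (ℝ × ℝ)) v = (v.1, a * v.1 + c * v.2) := rfl

lemma st13_hasFDerivAt {g : ℝ → ℝ} (hg : ContDiff ℝ (⊤ : ℕ∞) g) (t0 z0 : ℝ)
    (hc : 1 + t0 * deriv g z0 ≠ 0) :
    HasFDerivAt (fun q : ℝ × ℝ => (q.1, q.2 + q.1 * g q.2))
      (st13shear (g z0) (1 + t0 * deriv g z0) hc : (ℝ × ℝ) →L[ℝ] (ℝ × ℝ)) (t0, z0) := by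
  have hgd : HasDerivAt g (deriv g z0) z0 := ((hg.differentiable (by simp)) z0).hasDerivAt
  have h1 : HasFDerivAt (fun q : ℝ × ℝ => g q.2)
      ((deriv g z0) • (ContinuousLinearMap.snd ℝ ℝ ℝ)) (t0, z0) :=
    hgd.comp_hasFDerivAt _ hasFDerivAt_snd
  have hmul : HasFDerivAt (fun q : ℝ × ℝ => q.1 * g q.2)
      (t0 • ((deriv g z0) • (ContinuousLinearMap.snd ℝ ℝ ℝ)) +
        (g z0) • (ContinuousLinearMap.fst ℝ ℝ ℝ)) (t0, z0) :=
    hasFDerivAt_fst.mul h1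
  have hsum := hasFDerivAt_snd.add hmul
  have hfin := hasFDerivAt_fst.prodMk hsum
  refine hfin.congr_fderiv ?_
  apply ContinuousLinearMap.ext
  intro v
  rw [st13shear_apply]
  simp [Prod.ext_iff]
  ring

/-- Implicit-function smoothness for a branch of `z + t g(z) = x`. -/
lemma st13_cdAt {g : ℝ → ℝ} (hg : ContDiff ℝ (⊤ : ℕ∞) g) {f : ℝ × ℝ → ℝ} {q0 : ℝ × ℝ} {z0 : ℝ}
    (heq : z0 + q0.1 * g z0 = q0.2) (hc : 1 + q0.1 * deriv g z0 ≠ 0)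
    {V : Set (ℝ × ℝ)} (hV : IsOpen V) (hz0V : (q0.1, z0) ∈ V)
    (hmatch : ∀ s w, (s, w) ∈ V → ∀ x : ℝ, w + s * g w = x → f (s, x) = w) :
    ContDiffAt ℝ (⊤ : ℕ∞) f q0 := by
  set Φ : ℝ × ℝ → ℝ × ℝ := fun q => (q.1, q.2 + q.1 * g q.2) with hΦdef
  have hΦcd : ContDiffAt ℝ (⊤ : ℕ∞) Φ (q0.1, z0) :=
    (contDiff_fst.prodMk (contDiff_snd.add (contDiff_fst.mul (hg.comp contDiff_snd)))).contDiffAt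
  have hΦd := st13_hasFDerivAt hg q0.1 z0 hc
  have hΦim : Φ (q0.1, z0) = q0 := by
    simp only [hΦdef]
    exact Prod.ext rfl heq
  set Ψ := hΦcd.localInverse hΦd (by simp) with hΨdef
  have hΨcd : ContDiffAt ℝ (⊤ : ℕ∞) Ψ q0 := by
    have := hΦcd.to_localInverse hΦd (by simp)
    rwa [hΦim] at this
  have hΨ0 : Ψ q0 = (q0.1, z0) := by
    have := hΦcd.localInverse_apply_image hΦd (by simp)
    rwa [hΦim] at this
  have hright : ∀ᶠ q in 𝓝 q0, Φ (Ψ q) = q := by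
    have := (hΦcd.hasStrictFDerivAt' hΦd (by simp)).eventually_right_inverse
    rwa [hΦim] at this
  have hVev : ∀ᶠ q in 𝓝 q0, Ψ q ∈ V := by
    have : ContinuousAt Ψ q0 := hΨcd.continuousAt
    have h2 : V ∈ 𝓝 (Ψ q0) := hV.mem_nhds (hΨ0 ▸ hz0V)
    exact this h2
  have hev : (fun q => (Ψ q).2) =ᶠ[𝓝 q0] f := by
    filter_upwards [hright, hVev] with q h1 h2
    simp only [hΦdef, Prod.ext_iff] at h1
    obtain ⟨h3, h4⟩ := h1
    rw [h3] at h4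
    have h5 : ((Ψ q).1, (Ψ q).2) ∈ V := by rwa [Prod.mk.eta]
    rw [h3] at h5
    have h6 := hmatch q.1 (Ψ q).2 h5 q.2 h4
    rw [Prod.mk.eta] at h6
    exact h6.symm
  exact (contDiff_snd.contDiffAt.comp q0 hΨcd).congr_of_eventuallyEq hev.symm

/-- Continuity of an implicitly defined branch. -/
lemma st13_cont {g : ℝ → ℝ} (hgc : Continuous g) {S : Set (ℝ × ℝ)} {f e1 e2 : ℝ × ℝ → ℝ}
    (he1 : ContinuousOn e1 S) (he2 : ContinuousOn e2 S)
    (hfe : ∀ q ∈ S, e1 q ≤ f q ∧ f q ≤ e2 q)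
    (heq : ∀ q ∈ S, f q + q.1 * g (f q) = q.2)
    (huniq : ∀ q ∈ S, ∀ w : ℝ, e1 q ≤ w → w ≤ e2 q → w + q.1 * g w = q.2 → w = f q) :
    ContinuousOn f S := by
  intro q0 hq0
  rw [ContinuousWithinAt]
  apply tendsto_of_subseq_tendsto
  intro ns hns
  have hmem : ∀ᶠ n in atTop, ns n ∈ S := hns.eventually eventually_mem_nhdsWithin
  have hq : Tendsto ns atTop (𝓝 q0) := hns.mono_right nhdsWithin_le_nhds
  have he1n : Tendsto (fun n => e1 (ns n)) atTop (𝓝 (e1 q0)) := (he1 q0 hq0).tendsto.comp hns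
  have he2n : Tendsto (fun n => e2 (ns n)) atTop (𝓝 (e2 q0)) := (he2 q0 hq0).tendsto.comp hns
  have hbound : ∀ᶠ n in atTop, f (ns n) ∈ Icc (e1 q0 - 1) (e2 q0 + 1) := by
    filter_upwards [hmem, he1n.eventually (eventually_gt_nhds (by linarith : e1 q0 - 1 < e1 q0)),
      he2n.eventually (eventually_lt_nhds (by linarith : e2 q0 < e2 q0 + 1))] with n h1 h2 h3
    exact ⟨le_trans h2.le (hfe _ h1).1, le_trans (hfe _ h1).2 h3.le⟩
  obtain ⟨a, _, φ, hφ, hfa⟩ := tendsto_subseq_of_frequently_bounded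
    (Metric.isBounded_Icc (e1 q0 - 1) (e2 q0 + 1)) hbound.frequently
  have hφt : Tendsto φ atTop atTop := hφ.tendsto_atTop
  have hqφ : Tendsto (fun n => ns (φ n)) atTop (𝓝 q0) := hq.comp hφt
  have hmemφ : ∀ᶠ n in atTop, ns (φ n) ∈ S := hφt.eventually hmem
  have hfa' : Tendsto (fun n => f (ns (φ n))) atTop (𝓝 a) := hfa
  have heqn : ∀ᶠ n in atTop,
      f (ns (φ n)) + (ns (φ n)).1 * g (f (ns (φ n))) = (ns (φ n)).2 := by
    filter_upwards [hmemφ] with n h using heq _ h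
  have hlim1 : Tendsto (fun n => f (ns (φ n)) + (ns (φ n)).1 * g (f (ns (φ n)))) atTop
      (𝓝 (a + q0.1 * g a)) :=
    hfa'.add (((continuous_fst.tendsto q0).comp hqφ).mul ((hgc.tendsto a).comp hfa'))
  have hlim2 : Tendsto (fun n => (ns (φ n)).2) atTop (𝓝 q0.2) :=
    (continuous_snd.tendsto q0).comp hqφ
  have heqa : a + q0.1 * g a = q0.2 :=
    tendsto_nhds_unique (hlim1.congr' heqn) hlim2
  have hb1 : e1 q0 ≤ a := by
    refine le_of_tendsto_of_tendsto (he1n.comp hφt) hfa' ?_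
    filter_upwards [hmemφ] with n h using (hfe _ h).1
  have hb2 : a ≤ e2 q0 := by
    refine le_of_tendsto_of_tendsto hfa' (he2n.comp hφt) ?_
    filter_upwards [hmemφ] with n h using (hfe _ h).2
  have ha : a = f q0 := huniq q0 hq0 a hb1 hb2 heqa
  exact ⟨φ, ha ▸ hfa'⟩

/-- Sign structure of `1 + t g'` for `t ∈ (1, 1+ε₀]`. -/
lemma st13_sign {g : ℝ → ℝ} (hg : ContDiff ℝ (⊤ : ℕ∞) g) {M : ℝ} (hM : ∀ x, |g x| ≤ M)
    (hg0 : deriv g 0 = -1)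
    {ε₀ : ℝ} {ηm ηp : ℝ → ℝ}
    (hlt : ∀ t ∈ Ioc (1 : ℝ) (1 + ε₀), ηm t < ηp t)
    (hroots : ∀ t ∈ Ioc (1 : ℝ) (1 + ε₀), ∀ z : ℝ,
      (1 + t * deriv g z = 0 ↔ z = ηm t ∨ z = ηp t)) :
    ∀ t ∈ Ioc (1:ℝ) (1+ε₀),
      (∀ z, z < ηm t → 0 < 1 + t * deriv g z) ∧
      (∀ z, ηp t < z → 0 < 1 + t * deriv g z) ∧
      (∀ z ∈ Ioo (ηm t) (ηp t), 1 + t * deriv g z < 0) ∧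
      ηm t < 0 ∧ 0 < ηp t := by
  have hgdiff : Differentiable ℝ g := hg.differentiable (by simp)
  have hgc : Continuous g := hg.continuous
  have hdc : Continuous (deriv g) := hg.continuous_deriv (by simp)
  have hM0 : 0 ≤ M := le_trans (abs_nonneg _) (hM 0)
  intro t ht
  have htpos : (0:ℝ) < t := lt_trans one_pos ht.1
  have hhc : Continuous (fun z => 1 + t * deriv g z) :=
    continuous_const.add (continuous_const.mul hdc)
  have hmp := hlt t ht
  have hne : ∀ z : ℝ, z ≠ ηm t → z ≠ ηp t → 1 + t * deriv g z ≠ 0 := by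
    intro z h1 h2 h0
    rcases (hroots t ht z).1 h0 with h | h
    · exact h1 h
    · exact h2 h
  have keyB : ∀ z, ηp t < z → 0 < 1 + t * deriv g z := by
    intro z hz
    by_contra hle
    push_neg at hle
    have hneg : 1 + t * deriv g z < 0 :=
      lt_of_le_of_ne hle (hne z (by linarith) (by linarith))
    have hall : ∀ w, z ≤ w → 1 + t * deriv g w < 0 := by
      intro w hw
      rcases eq_or_lt_of_le hw with rfl | hw'
      · exact hneg
      by_contra hpos
      push_neg at hpos
      obtain ⟨c, hc, hc0⟩ := intermediate_value_Icc hw'.le hhc.continuousOn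
        (mem_Icc.2 ⟨hneg.le, hpos⟩)
      have hc1 := hc.1
      rcases (hroots t ht c).1 hc0 with h | h <;> rw [h] at hc1 <;> linarith
    set w := z + t * (2*M+1) with hwdef
    have hzw : z < w := by nlinarith
    obtain ⟨c, hc, hceq⟩ := exists_deriv_eq_slope g hzw hgc.continuousOn
      hgdiff.differentiableOn
    have h1 : 1 + t * deriv g c < 0 := hall c hc.1.le
    have h2 : deriv g c < -1/t := by
      rw [lt_div_iff₀ htpos]
      nlinarith
    have h3 : (g w - g z) / (w - z) < -1/t := hceq ▸ h2
    have h4 : g w - g z < -1/t * (w - z) := by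
      rw [div_lt_iff₀ (by linarith : (0:ℝ) < w - z)] at h3
      linarith [h3]
    have h5 : -1/t * (w - z) = -(2*M+1) := by
      field_simp [hwdef]
      ring
    have := hM w
    have := hM z
    rw [abs_le] at *
    nlinarith
  have keyA : ∀ z, z < ηm t → 0 < 1 + t * deriv g z := by
    intro z hz
    by_contra hle
    push_neg at hle
    have hneg : 1 + t * deriv g z < 0 :=
      lt_of_le_of_ne hle (hne z (by linarith) (by linarith))
    have hall : ∀ w, w ≤ z → 1 + t * deriv g w < 0 := by
      intro w hw
      rcases eq_or_lt_of_le hw with rfl | hw'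
      · exact hneg
      by_contra hpos
      push_neg at hpos
      obtain ⟨c, hc, hc0⟩ := intermediate_value_Icc' hw'.le hhc.continuousOn
        (mem_Icc.2 ⟨hneg.le, hpos⟩)
      have hc2 := hc.2
      rcases (hroots t ht c).1 hc0 with h | h <;> rw [h] at hc2 <;> linarith
    set w := z - t * (2*M+1) with hwdef
    have hzw : w < z := by nlinarith
    obtain ⟨c, hc, hceq⟩ := exists_deriv_eq_slope g hzw hgc.continuousOn
      hgdiff.differentiableOn
    have h1 : 1 + t * deriv g c < 0 := hall c hc.2.le
    have h2 : deriv g c < -1/t := by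
      rw [lt_div_iff₀ htpos]
      nlinarith
    have h3 : (g z - g w) / (z - w) < -1/t := hceq ▸ h2
    have h4 : g z - g w < -1/t * (z - w) := by
      rw [div_lt_iff₀ (by linarith : (0:ℝ) < z - w)] at h3
      linarith [h3]
    have h5 : -1/t * (z - w) = -(2*M+1) := by
      field_simp [hwdef]
      ring
    have := hM w
    have := hM z
    rw [abs_le] at *
    nlinarith
  have h0neg : 1 + t * deriv g 0 < 0 := by rw [hg0]; linarith [ht.1]
  have hη : ηm t < 0 ∧ 0 < ηp t := by
    constructor
    · rcases lt_trichotomy (ηm t) 0 with h | h | h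
      · exact h
      · exfalso
        have := (hroots t ht (ηm t)).2 (Or.inl rfl)
        rw [h] at this
        linarith
      · linarith [keyA 0 h]
    · rcases lt_trichotomy 0 (ηp t) with h | h | h
      · exact h
      · exfalso
        have := (hroots t ht (ηp t)).2 (Or.inr rfl)
        rw [← h] at this
        linarith
      · linarith [keyB 0 h]
  refine ⟨keyA, keyB, ?_, hη⟩
  intro z hz
  by_contra hle
  push_neg at hle
  have hpos : 0 < 1 + t * deriv g z :=
    lt_of_le_of_ne hle (Ne.symm (hne z (ne_of_gt hz.1) (ne_of_lt hz.2)))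
  have hz0 : z ≠ 0 := by
    intro h
    rw [h] at hpos
    linarith
  rcases lt_or_gt_of_ne hz0 with h | h
  · obtain ⟨c, hc, hc0⟩ := intermediate_value_Icc' h.le hhc.continuousOn
      (mem_Icc.2 ⟨h0neg.le, hpos.le⟩)
    have hc1 := hc.1
    have hc2 := hc.2
    rcases (hroots t ht c).1 hc0 with he | he <;> rw [he] at hc1 hc2 <;>
      [linarith [hz.1]; linarith [hη.2]]
  · obtain ⟨c, hc, hc0⟩ := intermediate_value_Icc h.le hhc.continuousOn
      (mem_Icc.2 ⟨h0neg.le, hpos.le⟩)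
    have hc1 := hc.1
    have hc2 := hc.2
    rcases (hroots t ht c).1 hc0 with he | he <;> rw [he] at hc1 hc2 <;>
      [linarith [hη.1]; linarith [hz.2]]

/-- Strict monotonicity of `z ↦ z + t g z` from positivity of `1 + t g'`. -/
lemma st13_monoF {g : ℝ → ℝ} (hg : ContDiff ℝ (⊤ : ℕ∞) g) {t : ℝ} {s : Set ℝ} (hconv : Convex ℝ s)
    (hpos : ∀ z ∈ interior s, 0 < 1 + t * deriv g z) :
    StrictMonoOn (fun z => z + t * g z) s := by
  refine strictMonoOn_of_deriv_pos hconv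
    ((continuous_id'.add (continuous_const.mul hg.continuous)).continuousOn) (fun z hz => ?_)
  have hd : HasDerivAt (fun z => z + t * g z) (1 + t * deriv g z) z :=
    (hasDerivAt_id z).add (((hg.differentiable (by simp) z).hasDerivAt).const_mul t)
  rw [hd.deriv]
  exact hpos z hz

lemma st13_antiF {g : ℝ → ℝ} (hg : ContDiff ℝ (⊤ : ℕ∞) g) {t : ℝ} {s : Set ℝ} (hconv : Convex ℝ s)
    (hneg : ∀ z ∈ interior s, 1 + t * deriv g z < 0) :
    StrictAntiOn (fun z => z + t * g z) s := by
  refine strictAntiOn_of_deriv_neg hconv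
    ((continuous_id'.add (continuous_const.mul hg.continuous)).continuousOn) (fun z hz => ?_)
  have hd : HasDerivAt (fun z => z + t * g z) (1 + t * deriv g z) z :=
    (hasDerivAt_id z).add (((hg.differentiable (by simp) z).hasDerivAt).const_mul t)
  rw [hd.deriv]
  exact hneg z hz

/-- Existence of a root to the left. -/
lemma st13_exL {g : ℝ → ℝ} (hgc : Continuous g) {M t a x : ℝ} (hM : ∀ x, |g x| ≤ M)
    (ht : 0 < t) (hx : x ≤ a + t * g a) : ∃ z, z ≤ a ∧ z + t * g z = x := by
  have hM0 : 0 ≤ M := le_trans (abs_nonneg _) (hM 0)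
  set z1 := min a (x - t*M - 1) with hz1
  have h1 : z1 ≤ a := min_le_left _ _
  have hFz1 : z1 + t * g z1 ≤ x - 1 := by
    have hgz := (abs_le.1 (hM z1)).2
    have h2 : z1 ≤ x - t*M - 1 := min_le_right _ _
    nlinarith
  obtain ⟨z, hz, hzeq⟩ := intermediate_value_Icc h1
    ((continuous_id'.add (continuous_const.mul hgc)).continuousOn)
    (mem_Icc.2 ⟨by show z1 + t * g z1 ≤ x; linarith, hx⟩)
  exact ⟨z, hz.2, hzeq⟩

/-- Existence of a root to the right. -/
lemma st13_exR {g : ℝ → ℝ} (hgc : Continuous g) {M t a x : ℝ} (hM : ∀ x, |g x| ≤ M)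
    (ht : 0 < t) (hx : a + t * g a ≤ x) : ∃ z, a ≤ z ∧ z + t * g z = x := by
  have hM0 : 0 ≤ M := le_trans (abs_nonneg _) (hM 0)
  set z1 := max a (x + t*M + 1) with hz1
  have h1 : a ≤ z1 := le_max_left _ _
  have hFz1 : x + 1 ≤ z1 + t * g z1 := by
    have hgz := (abs_le.1 (hM z1)).1
    have h2 : x + t*M + 1 ≤ z1 := le_max_right _ _
    nlinarith
  obtain ⟨z, hz, hzeq⟩ := intermediate_value_Icc h1
    ((continuous_id'.add (continuous_const.mul hgc)).continuousOn)
    (mem_Icc.2 ⟨hx, by show x ≤ z1 + t * g z1; linarith⟩)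
  exact ⟨z, hz.1, hzeq⟩

/-- Existence of a root in the middle (decreasing) branch. -/
lemma st13_exMid {g : ℝ → ℝ} (hgc : Continuous g) {t a b x : ℝ} (hab : a ≤ b)
    (hx1 : b + t * g b ≤ x) (hx2 : x ≤ a + t * g a) :
    ∃ z, a ≤ z ∧ z ≤ b ∧ z + t * g z = x := by
  obtain ⟨z, hz, hzeq⟩ := intermediate_value_Icc' hab
    ((continuous_id'.add (continuous_const.mul hgc)).continuousOn)
    (mem_Icc.2 ⟨hx1, hx2⟩)
  exact ⟨z, hz.1, hz.2, hzeq⟩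

end St13Aux

section St13Eta

/-- Continuity of the critical-point branches `η∓` on `[1, 1+ε₀]`. -/
lemma st13_etacont {g : ℝ → ℝ} (hg : ContDiff ℝ (⊤ : ℕ∞) g)
    {ε₀ : ℝ} {ηm ηp : ℝ → ℝ}
    (hroots : ∀ t ∈ Ioc (1 : ℝ) (1 + ε₀), ∀ z : ℝ,
      (1 + t * deriv g z = 0 ↔ z = ηm t ∨ z = ηp t))
    (hsign : ∀ t ∈ Ioc (1:ℝ) (1+ε₀),
      (∀ z, z < ηm t → 0 < 1 + t * deriv g z) ∧
      (∀ z, ηp t < z → 0 < 1 + t * deriv g z) ∧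
      (∀ z ∈ Ioo (ηm t) (ηp t), 1 + t * deriv g z < 0) ∧
      ηm t < 0 ∧ 0 < ηp t)
    (hsm : Tendsto ηm (𝓝[>] (1 : ℝ)) (𝓝 0))
    (hsp : Tendsto ηp (𝓝[>] (1 : ℝ)) (𝓝 0))
    (hm1 : ηm 1 = 0) (hp1 : ηp 1 = 0) :
    ContinuousOn ηm (Icc 1 (1+ε₀)) ∧ ContinuousOn ηp (Icc 1 (1+ε₀)) := by
  have hdc : Continuous (deriv g) := hg.continuous_deriv (by simp)
  constructor
  · intro t0 ht0
    rcases eq_or_lt_of_le ht0.1 with heq1 | hlt1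
    · refine ContinuousWithinAt.mono ?_ Icc_subset_Ici_self
      rw [← heq1, ← continuousWithinAt_Ioi_iff_Ici]
      unfold ContinuousWithinAt
      rw [hm1]
      exact hsm
    · have ht0' : t0 ∈ Ioc (1:ℝ) (1+ε₀) := ⟨hlt1, ht0.2⟩
      obtain ⟨kA, kB, kC, hm0, hp0⟩ := hsign t0 ht0'
      unfold ContinuousWithinAt
      rw [Metric.tendsto_nhds]
      intro δ hδ
      set d := min (δ/2) (min (-(ηm t0)/2) ((ηp t0 - ηm t0)/2)) with hd
      have hd1 : d ≤ δ/2 := min_le_left _ _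
      have hd2 : d ≤ -(ηm t0)/2 := le_trans (min_le_right _ _) (min_le_left _ _)
      have hd3 : d ≤ (ηp t0 - ηm t0)/2 := le_trans (min_le_right _ _) (min_le_right _ _)
      have hdpos : 0 < d := by
        apply lt_min (by linarith)
        apply lt_min (by linarith) (by linarith)
      set a := ηm t0 - d with ha
      set b := ηm t0 + d with hb
      have hb0 : b < 0 := by simp only [hb]; linarith
      have hbp : b < ηp t0 := by simp only [hb]; linarith
      have hpa : 0 < 1 + t0 * deriv g a := kA a (by simp only [ha]; linarith)
      have hpb : 1 + t0 * deriv g b < 0 := kC b ⟨by simp only [hb]; linarith, hbp⟩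
      have hca : Continuous (fun t : ℝ => 1 + t * deriv g a) :=
        continuous_const.add (continuous_id'.mul continuous_const)
      have hcb : Continuous (fun t : ℝ => 1 + t * deriv g b) :=
        continuous_const.add (continuous_id'.mul continuous_const)
      have hev : ∀ᶠ t in 𝓝 t0, 1 < t ∧ 0 < 1 + t * deriv g a ∧ 1 + t * deriv g b < 0 :=
        (eventually_gt_nhds hlt1).and (((hca.tendsto t0).eventually
          (eventually_gt_nhds hpa)).and ((hcb.tendsto t0).eventually (eventually_lt_nhds hpb)))
      filter_upwards [hev.filter_mono nhdsWithin_le_nhds, eventually_mem_nhdsWithin]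
        with t hevt htI
      obtain ⟨h1t, h2t, h3t⟩ := hevt
      have ht' : t ∈ Ioc (1:ℝ) (1+ε₀) := ⟨h1t, htI.2⟩
      have st := hsign t ht'
      have hhc : Continuous (fun z => 1 + t * deriv g z) :=
        continuous_const.add (continuous_const.mul hdc)
      obtain ⟨c, hcI, hc0⟩ := intermediate_value_Icc' (by simp only [ha, hb]; linarith : a ≤ b)
        hhc.continuousOn (mem_Icc.2 ⟨h3t.le, h2t.le⟩)
      rcases (hroots t ht' c).1 hc0 with hc' | hc'
      · rw [hc'] at hcI
        rw [Real.dist_eq, abs_lt]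
        have hcI1 := hcI.1
        have hcI2 := hcI.2
        simp only [ha, hb] at hcI1 hcI2
        constructor <;> linarith
      · exfalso
        have hcI2 := hcI.2
        rw [hc'] at hcI2
        have := st.2.2.2.2
        linarith
  · intro t0 ht0
    rcases eq_or_lt_of_le ht0.1 with heq1 | hlt1
    · refine ContinuousWithinAt.mono ?_ Icc_subset_Ici_self
      rw [← heq1, ← continuousWithinAt_Ioi_iff_Ici]
      unfold ContinuousWithinAt
      rw [hp1]
      exact hsp
    · have ht0' : t0 ∈ Ioc (1:ℝ) (1+ε₀) := ⟨hlt1, ht0.2⟩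
      obtain ⟨kA, kB, kC, hm0, hp0⟩ := hsign t0 ht0'
      unfold ContinuousWithinAt
      rw [Metric.tendsto_nhds]
      intro δ hδ
      set d := min (δ/2) (min ((ηp t0)/2) ((ηp t0 - ηm t0)/2)) with hd
      have hd1 : d ≤ δ/2 := min_le_left _ _
      have hd2 : d ≤ (ηp t0)/2 := le_trans (min_le_right _ _) (min_le_left _ _)
      have hd3 : d ≤ (ηp t0 - ηm t0)/2 := le_trans (min_le_right _ _) (min_le_right _ _)
      have hdpos : 0 < d := by
        apply lt_min (by linarith)
        apply lt_min (by linarith) (by linarith)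
      set a := ηp t0 - d with ha
      set b := ηp t0 + d with hb
      have ha0 : 0 < a := by simp only [ha]; linarith
      have ham : ηm t0 < a := by simp only [ha]; linarith
      have hpa : 1 + t0 * deriv g a < 0 := kC a ⟨ham, by simp only [ha]; linarith⟩
      have hpb : 0 < 1 + t0 * deriv g b := kB b (by simp only [hb]; linarith)
      have hca : Continuous (fun t : ℝ => 1 + t * deriv g a) :=
        continuous_const.add (continuous_id'.mul continuous_const)
      have hcb : Continuous (fun t : ℝ => 1 + t * deriv g b) :=
        continuous_const.add (continuous_id'.mul continuous_const)
      have hev : ∀ᶠ t in 𝓝 t0, 1 < t ∧ 1 + t * deriv g a < 0 ∧ 0 < 1 + t * deriv g b :=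
        (eventually_gt_nhds hlt1).and (((hca.tendsto t0).eventually
          (eventually_lt_nhds hpa)).and ((hcb.tendsto t0).eventually (eventually_gt_nhds hpb)))
      filter_upwards [hev.filter_mono nhdsWithin_le_nhds, eventually_mem_nhdsWithin]
        with t hevt htI
      obtain ⟨h1t, h2t, h3t⟩ := hevt
      have ht' : t ∈ Ioc (1:ℝ) (1+ε₀) := ⟨h1t, htI.2⟩
      have st := hsign t ht'
      have hhc : Continuous (fun z => 1 + t * deriv g z) :=
        continuous_const.add (continuous_const.mul hdc)
      obtain ⟨c, hcI, hc0⟩ := intermediate_value_Icc (by simp only [ha, hb]; linarith : a ≤ b)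
        hhc.continuousOn (mem_Icc.2 ⟨h2t.le, h3t.le⟩)
      rcases (hroots t ht' c).1 hc0 with hc' | hc'
      · exfalso
        have hcI1 := hcI.1
        rw [hc'] at hcI1
        have := st.2.2.2.1
        linarith
      · rw [hc'] at hcI
        rw [Real.dist_eq, abs_lt]
        have hcI1 := hcI.1
        have hcI2 := hcI.2
        simp only [ha, hb] at hcI1 hcI2
        constructor <;> linarith

end St13Eta

/-- Infinite-degeneracy assumption (B_p). -/
def AssumptionB (p : ℝ) (g r0 : ℝ → ℝ) : Prop :=
  0 < p ∧
  ContDiff ℝ (⊤ : ℕ∞) g ∧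
  (∃ M, ∀ x, |g x| ≤ M) ∧
  deriv g 0 = -1 ∧
  (∀ x, -1 ≤ deriv g x) ∧
  ContDiff ℝ (⊤ : ℕ∞) r0 ∧
  (∃ M, ∀ x, |r0 x| ≤ M) ∧
  g 0 = 0 ∧
  (∀ x : ℝ, x ≠ 0 → g x = -x + Real.exp (-|x| ^ (-p)) * (x / p + r0 x)) ∧
  (∀ j : ℕ, j ≤ 2 → (fun x => iteratedDeriv j r0 x) =O[𝓝 (0 : ℝ)] fun x => x ^ (2 - j)) ∧
  (∀ j : ℕ, 3 ≤ j → (fun x => iteratedDeriv j r0 x) =O[𝓝 (0 : ℝ)] fun _ => (1 : ℝ))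

/-- Under (B_p), for `t ∈ (1, 1+ε]`: `y₋(t,·)` is an increasing bijection from
`(-∞, x₋(t)]` onto `(-∞, η₋(t)]`, `y₀(t,·)` a decreasing bijection from `[x₊(t), x₋(t)]`
onto `[η₋(t), η₊(t)]`, `y₊(t,·)` an increasing bijection from `[x₊(t), ∞)` onto
`[η₊(t), ∞)`; moreover `y_m ∈ C^∞(Ω_m) ∩ C(closure Ω_m)` for `m ∈ {-,0,+}`. -/
theorem statement13 (p : ℝ) (g r0 : ℝ → ℝ) (hB : AssumptionB p g r0)
    (ε₀ : ℝ) (hε₀ : 0 < ε₀)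
    (ηm ηp : ℝ → ℝ)
    (hlt : ∀ t ∈ Ioc (1 : ℝ) (1 + ε₀), ηm t < ηp t)
    -- for 1 < t ≤ 1+ε₀ the equation 1 + t g'(y) = 0 has exactly the two roots η₋(t) < η₊(t)
    (hroots : ∀ t ∈ Ioc (1 : ℝ) (1 + ε₀), ∀ z : ℝ,
      (1 + t * deriv g z = 0 ↔ z = ηm t ∨ z = ηp t))
    (hsm : Tendsto ηm (𝓝[>] (1 : ℝ)) (𝓝 0))
    (hsp : Tendsto ηp (𝓝[>] (1 : ℝ)) (𝓝 0))
    (hm1 : ηm 1 = 0) (hp1 : ηp 1 = 0)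
    -- 0 is the unique point where g' attains its minimum -1
    (hming : ∀ z : ℝ, z ≠ 0 → -1 < deriv g z)
    (xm xp : ℝ → ℝ)
    (hxm : ∀ t, xm t = ηm t + t * g (ηm t))
    (hxp : ∀ t, xp t = ηp t + t * g (ηp t))
    (ym y0 yp : ℝ → ℝ → ℝ)
    -- the three characteristic root branches, for 1 < t ≤ 1+ε₀
    (hym : ∀ t x z : ℝ, 1 < t → t ≤ 1 + ε₀ → z + t * g z = x → z ≤ ηm t → ym t x = z)
    (hy0 : ∀ t x z : ℝ, 1 < t → t ≤ 1 + ε₀ → z + t * g z = x → ηm t ≤ z → z ≤ ηp t →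
      y0 t x = z)
    (hyp : ∀ t x z : ℝ, 1 < t → t ≤ 1 + ε₀ → z + t * g z = x → ηp t ≤ z → yp t x = z)
    -- at t = 1 the branches are given by the (unique) root of z + g(z) = x
    (hym1 : ∀ x z : ℝ, z + g z = x → z ≤ 0 → ym 1 x = z)
    (hyp1 : ∀ x z : ℝ, z + g z = x → 0 ≤ z → yp 1 x = z)
    (hy01 : y0 1 0 = 0) :
    ∃ ε : ℝ, 0 < ε ∧ ε ≤ ε₀ ∧
      (∀ t ∈ Ioc (1 : ℝ) (1 + ε),
        -- y₋(t,·): increasing bijection (-∞, x₋(t)] → (-∞, η₋(t)]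
        StrictMonoOn (fun x => ym t x) (Iic (xm t)) ∧
        (fun x => ym t x) '' Iic (xm t) = Iic (ηm t) ∧
        -- y₀(t,·): decreasing bijection [x₊(t), x₋(t)] → [η₋(t), η₊(t)]
        StrictAntiOn (fun x => y0 t x) (Icc (xp t) (xm t)) ∧
        (fun x => y0 t x) '' Icc (xp t) (xm t) = Icc (ηm t) (ηp t) ∧
        -- y₊(t,·): increasing bijection [x₊(t), ∞) → [η₊(t), ∞)
        StrictMonoOn (fun x => yp t x) (Ici (xp t)) ∧
        (fun x => yp t x) '' Ici (xp t) = Ici (ηp t)) ∧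
      -- smoothness in the open regions Ω_m and continuity up to their closures
      ContDiffOn ℝ (⊤ : ℕ∞) (fun q : ℝ × ℝ => ym q.1 q.2)
        {q : ℝ × ℝ | 1 < q.1 ∧ q.1 < 1 + ε ∧ q.2 < xm q.1} ∧
      ContinuousOn (fun q : ℝ × ℝ => ym q.1 q.2)
        {q : ℝ × ℝ | 1 ≤ q.1 ∧ q.1 ≤ 1 + ε ∧ q.2 ≤ xm q.1} ∧
      ContDiffOn ℝ (⊤ : ℕ∞) (fun q : ℝ × ℝ => y0 q.1 q.2)
        {q : ℝ × ℝ | 1 < q.1 ∧ q.1 < 1 + ε ∧ xp q.1 < q.2 ∧ q.2 < xm q.1} ∧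
      ContinuousOn (fun q : ℝ × ℝ => y0 q.1 q.2)
        {q : ℝ × ℝ | 1 ≤ q.1 ∧ q.1 ≤ 1 + ε ∧ xp q.1 ≤ q.2 ∧ q.2 ≤ xm q.1} ∧
      ContDiffOn ℝ (⊤ : ℕ∞) (fun q : ℝ × ℝ => yp q.1 q.2)
        {q : ℝ × ℝ | 1 < q.1 ∧ q.1 < 1 + ε ∧ xp q.1 < q.2} ∧
      ContinuousOn (fun q : ℝ × ℝ => yp q.1 q.2)
        {q : ℝ × ℝ | 1 ≤ q.1 ∧ q.1 ≤ 1 + ε ∧ xp q.1 ≤ q.2} := by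
  obtain ⟨hp, hg, ⟨M, hM⟩, hg0, hgmin, _, _, hg00, _, _, _⟩ := hB
  have hgc : Continuous g := hg.continuous
  have hdc : Continuous (deriv g) := hg.continuous_deriv (by simp)
  have hsign := st13_sign hg hM hg0 hlt hroots
  obtain ⟨hetam, hetap⟩ := st13_etacont hg hroots hsign hsm hsp hm1 hp1
  have xm1 : xm 1 = 0 := by rw [hxm, hm1, hg00]; ring
  have xp1 : xp 1 = 0 := by rw [hxp, hp1, hg00]; ring
  -- existence + defining property of the three branches, up to the boundary `t = 1`
  have specm : ∀ t, 1 ≤ t → t ≤ 1 + ε₀ → ∀ x, x ≤ xm t →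
      ym t x ≤ ηm t ∧ ym t x + t * g (ym t x) = x := by
    intro t ht1 ht2 x hx
    rcases eq_or_lt_of_le ht1 with heq | hlt'
    · rw [← heq] at hx ⊢
      rw [xm1] at hx
      obtain ⟨z, hz, hzeq⟩ := st13_exL (M := M) (t := 1) (a := 0) (x := x) hgc hM one_pos
        (by rw [hg00]; linarith)
      have hzeq' : z + g z = x := by rw [← hzeq]; ring
      rw [hym1 x z hzeq' hz, hm1]
      exact ⟨hz, hzeq⟩
    · obtain ⟨z, hz, hzeq⟩ := st13_exL (M := M) (t := t) (a := ηm t) (x := x) hgc hM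
        (by linarith : (0:ℝ) < t) (by rw [← hxm]; exact hx)
      rw [hym t x z hlt' ht2 hzeq hz]
      exact ⟨hz, hzeq⟩
  have uniqm : ∀ t, 1 ≤ t → t ≤ 1 + ε₀ → ∀ x w, w + t * g w = x → w ≤ ηm t → ym t x = w := by
    intro t ht1 ht2 x w hweq hwle
    rcases eq_or_lt_of_le ht1 with heq | hlt'
    · rw [← heq] at hweq hwle ⊢
      rw [hm1] at hwle
      exact hym1 x w (by rw [← hweq]; ring) hwle
    · exact hym t x w hlt' ht2 hweq hwle
  have specp : ∀ t, 1 ≤ t → t ≤ 1 + ε₀ → ∀ x, xp t ≤ x →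
      ηp t ≤ yp t x ∧ yp t x + t * g (yp t x) = x := by
    intro t ht1 ht2 x hx
    rcases eq_or_lt_of_le ht1 with heq | hlt'
    · rw [← heq] at hx ⊢
      rw [xp1] at hx
      obtain ⟨z, hz, hzeq⟩ := st13_exR (M := M) (t := 1) (a := 0) (x := x) hgc hM one_pos
        (by rw [hg00]; linarith)
      have hzeq' : z + g z = x := by rw [← hzeq]; ring
      rw [hyp1 x z hzeq' hz, hp1]
      exact ⟨hz, hzeq⟩
    · obtain ⟨z, hz, hzeq⟩ := st13_exR (M := M) (t := t) (a := ηp t) (x := x) hgc hM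
        (by linarith : (0:ℝ) < t) (by rw [← hxp]; exact hx)
      rw [hyp t x z hlt' ht2 hzeq hz]
      exact ⟨hz, hzeq⟩
  have uniqp : ∀ t, 1 ≤ t → t ≤ 1 + ε₀ → ∀ x w, w + t * g w = x → ηp t ≤ w → yp t x = w := by
    intro t ht1 ht2 x w hweq hwle
    rcases eq_or_lt_of_le ht1 with heq | hlt'
    · rw [← heq] at hweq hwle ⊢
      rw [hp1] at hwle
      exact hyp1 x w (by rw [← hweq]; ring) hwle
    · exact hyp t x w hlt' ht2 hweq hwle
  have spec0 : ∀ t, 1 ≤ t → t ≤ 1 + ε₀ → ∀ x, xp t ≤ x → x ≤ xm t →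
      (ηm t ≤ y0 t x ∧ y0 t x ≤ ηp t) ∧ y0 t x + t * g (y0 t x) = x := by
    intro t ht1 ht2 x hx1 hx2
    rcases eq_or_lt_of_le ht1 with heq | hlt'
    · rw [← heq] at hx1 hx2 ⊢
      rw [xp1] at hx1
      rw [xm1] at hx2
      have hx0 : x = 0 := le_antisymm hx2 hx1
      rw [hx0, hy01, hm1, hp1]
      refine ⟨⟨le_refl _, le_refl _⟩, ?_⟩
      rw [hg00]; ring
    · obtain ⟨z, hz1, hz2, hzeq⟩ := st13_exMid (t := t) (x := x) hgc (hlt t ⟨hlt', ht2⟩).le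
        (by rw [← hxp]; exact hx1) (by rw [← hxm]; exact hx2)
      rw [hy0 t x z hlt' ht2 hzeq hz1 hz2]
      exact ⟨⟨hz1, hz2⟩, hzeq⟩
  have uniq0 : ∀ t, 1 ≤ t → t ≤ 1 + ε₀ → ∀ x w, w + t * g w = x → ηm t ≤ w → w ≤ ηp t →
      y0 t x = w := by
    intro t ht1 ht2 x w hweq hw1 hw2
    rcases eq_or_lt_of_le ht1 with heq | hlt'
    · rw [← heq] at hweq hw1 hw2 ⊢
      rw [hm1] at hw1
      rw [hp1] at hw2
      have hw0 : w = 0 := le_antisymm hw2 hw1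
      have hx0 : x = 0 := by rw [← hweq, hw0, hg00]; ring
      rw [hx0, hw0, hy01]
    · exact hy0 t x w hlt' ht2 hweq hw1 hw2
  refine ⟨ε₀, hε₀, le_refl _, ?_, ?_, ?_, ?_, ?_, ?_, ?_⟩
  · -- bijections
    intro t ht
    obtain ⟨kA, kB, kC, hm0, hp0⟩ := hsign t ht
    have ht1 := ht.1
    have ht2 := ht.2
    have hmp := hlt t ht
    have FmonoL : StrictMonoOn (fun z => z + t * g z) (Iic (ηm t)) :=
      st13_monoF hg (convex_Iic _) (by rw [interior_Iic]; exact fun z hz => kA z hz)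
    have Fanti : StrictAntiOn (fun z => z + t * g z) (Icc (ηm t) (ηp t)) :=
      st13_antiF hg (convex_Icc _ _) (by rw [interior_Icc]; exact kC)
    have FmonoR : StrictMonoOn (fun z => z + t * g z) (Ici (ηp t)) :=
      st13_monoF hg (convex_Ici _) (by rw [interior_Ici]; exact fun z hz => kB z hz)
    refine ⟨?_, ?_, ?_, ?_, ?_, ?_⟩
    · -- ym strictly monotone
      intro x1 hx1 x2 hx2 h12
      obtain ⟨hle1, heq1⟩ := specm t ht1.le ht2 x1 hx1
      obtain ⟨hle2, heq2⟩ := specm t ht1.le ht2 x2 hx2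
      show ym t x1 < ym t x2
      by_contra hcon
      push_neg at hcon
      rcases eq_or_lt_of_le hcon with he | hl
      · rw [he] at heq2
        linarith
      · have := FmonoL (mem_Iic.2 hle2) (mem_Iic.2 hle1) hl
        simp only at this
        rw [heq2, heq1] at this
        linarith
    · -- ym image
      ext w
      simp only [mem_image, mem_Iic]
      constructor
      · rintro ⟨x, hx, rfl⟩
        exact (specm t ht1.le ht2 x hx).1
      · intro hw
        refine ⟨w + t * g w, ?_, ?_⟩
        · have := FmonoL.monotoneOn (mem_Iic.2 hw) (mem_Iic.2 (le_refl _)) hw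
          rw [hxm]
          exact this
        · exact uniqm t ht1.le ht2 _ w rfl hw
    · -- y0 strictly antitone
      intro x1 hx1 x2 hx2 h12
      obtain ⟨⟨ha1, hb1⟩, heq1⟩ := spec0 t ht1.le ht2 x1 hx1.1 hx1.2
      obtain ⟨⟨ha2, hb2⟩, heq2⟩ := spec0 t ht1.le ht2 x2 hx2.1 hx2.2
      show y0 t x2 < y0 t x1
      by_contra hcon
      push_neg at hcon
      rcases eq_or_lt_of_le hcon with he | hl
      · rw [← he] at heq2
        linarith
      · have := Fanti (mem_Icc.2 ⟨ha1, hb1⟩) (mem_Icc.2 ⟨ha2, hb2⟩) hl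
        simp only at this
        rw [heq2, heq1] at this
        linarith
    · -- y0 image
      ext w
      simp only [mem_image, mem_Icc]
      constructor
      · rintro ⟨x, hx, rfl⟩
        exact (spec0 t ht1.le ht2 x hx.1 hx.2).1
      · rintro ⟨hw1, hw2⟩
        refine ⟨w + t * g w, ⟨?_, ?_⟩, ?_⟩
        · have := Fanti.antitoneOn (mem_Icc.2 ⟨hw1, hw2⟩) (mem_Icc.2 ⟨hmp.le, le_refl _⟩) hw2
          rw [hxp]
          exact this
        · have := Fanti.antitoneOn (mem_Icc.2 ⟨le_refl _, hmp.le⟩) (mem_Icc.2 ⟨hw1, hw2⟩) hw1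
          rw [hxm]
          exact this
        · exact uniq0 t ht1.le ht2 _ w rfl hw1 hw2
    · -- yp strictly monotone
      intro x1 hx1 x2 hx2 h12
      obtain ⟨hle1, heq1⟩ := specp t ht1.le ht2 x1 hx1
      obtain ⟨hle2, heq2⟩ := specp t ht1.le ht2 x2 hx2
      show yp t x1 < yp t x2
      by_contra hcon
      push_neg at hcon
      rcases eq_or_lt_of_le hcon with he | hl
      · rw [he] at heq2
        linarith
      · have := FmonoR (mem_Ici.2 hle2) (mem_Ici.2 hle1) hl
        simp only at this
        rw [heq2, heq1] at this
        linarith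
    · -- yp image
      ext w
      simp only [mem_image, mem_Ici]
      constructor
      · rintro ⟨x, hx, rfl⟩
        exact (specp t ht1.le ht2 x hx).1
      · intro hw
        refine ⟨w + t * g w, ?_, ?_⟩
        · have := FmonoR.monotoneOn (mem_Ici.2 (le_refl _)) (mem_Ici.2 hw) hw
          rw [hxp]
          exact this
        · exact uniqp t ht1.le ht2 _ w rfl hw
  · -- ContDiffOn ym
    intro q hq
    obtain ⟨h1, h2, h3⟩ := hq
    apply ContDiffAt.contDiffWithinAt
    obtain ⟨hle0, heq0⟩ := specm q.1 h1.le h2.le q.2 h3.le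
    obtain ⟨kA, kB, kC, hm0, hp0⟩ := hsign q.1 ⟨h1, h2.le⟩
    have hstrict : ym q.1 q.2 < ηm q.1 := by
      rcases eq_or_lt_of_le hle0 with he | hl
      · exfalso
        rw [he] at heq0
        rw [hxm] at h3
        linarith
      · exact hl
    have hcpos : 0 < 1 + q.1 * deriv g (ym q.1 q.2) := kA _ hstrict
    refine st13_cdAt hg heq0 (ne_of_gt hcpos)
      (V := {r : ℝ × ℝ | (1 < r.1 ∧ r.1 < 1 + ε₀) ∧ r.2 < 0 ∧ 0 < 1 + r.1 * deriv g r.2})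
      ?_ ?_ ?_
    · exact ((isOpen_lt continuous_const continuous_fst).and
        (isOpen_lt continuous_fst continuous_const)).and
        ((isOpen_lt continuous_snd continuous_const).and
          (isOpen_lt continuous_const
            (continuous_const.add (continuous_fst.mul (hdc.comp continuous_snd)))))
    · exact ⟨⟨h1, h2⟩, lt_trans hstrict hm0, hcpos⟩
    · intro s w hsw x heqx
      obtain ⟨⟨hs1, hs2⟩, hw0, hwpos⟩ := hsw
      obtain ⟨sA, sB, sC, sm0, sp0⟩ := hsign s ⟨hs1, hs2.le⟩
      have hwle : w ≤ ηm s := by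
        by_contra hge
        push_neg at hge
        have := sC w ⟨hge, lt_trans hw0 sp0⟩
        linarith
      exact hym s x w hs1 hs2.le heqx hwle
  · -- ContinuousOn ym
    refine st13_cont hgc (e1 := fun q : ℝ × ℝ => q.2 - q.1 * M)
      (e2 := fun q : ℝ × ℝ => ηm q.1) ?_ ?_ ?_ ?_ ?_
    · exact (continuous_snd.sub (continuous_fst.mul continuous_const)).continuousOn
    · exact hetam.comp continuous_fst.continuousOn (fun q hq => ⟨hq.1, hq.2.1⟩)
    · intro q hq
      obtain ⟨h1, h2, h3⟩ := hq
      obtain ⟨hle, heq⟩ := specm q.1 h1 h2 q.2 h3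
      refine ⟨?_, hle⟩
      show q.2 - q.1 * M ≤ ym q.1 q.2
      have hgb := (abs_le.1 (hM (ym q.1 q.2))).2
      have hmul : q.1 * g (ym q.1 q.2) ≤ q.1 * M :=
        mul_le_mul_of_nonneg_left hgb (by linarith)
      linarith
    · intro q hq
      exact (specm q.1 hq.1 hq.2.1 q.2 hq.2.2).2
    · intro q hq w _ hw2 hweq
      exact (uniqm q.1 hq.1 hq.2.1 q.2 w hweq hw2).symm
  · -- ContDiffOn y0
    intro q hq
    obtain ⟨h1, h2, h3, h4⟩ := hq
    apply ContDiffAt.contDiffWithinAt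
    obtain ⟨⟨hla, hlb⟩, heq0⟩ := spec0 q.1 h1.le h2.le q.2 h3.le h4.le
    obtain ⟨kA, kB, kC, hm0, hp0⟩ := hsign q.1 ⟨h1, h2.le⟩
    have hstrict1 : ηm q.1 < y0 q.1 q.2 := by
      rcases eq_or_lt_of_le hla with he | hl
      · exfalso
        rw [← he] at heq0
        rw [hxm] at h4
        linarith
      · exact hl
    have hstrict2 : y0 q.1 q.2 < ηp q.1 := by
      rcases eq_or_lt_of_le hlb with he | hl
      · exfalso
        rw [he] at heq0
        rw [hxp] at h3
        linarith
      · exact hl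
    have hcneg : 1 + q.1 * deriv g (y0 q.1 q.2) < 0 := kC _ ⟨hstrict1, hstrict2⟩
    refine st13_cdAt hg heq0 (ne_of_lt hcneg)
      (V := {r : ℝ × ℝ | (1 < r.1 ∧ r.1 < 1 + ε₀) ∧ 1 + r.1 * deriv g r.2 < 0})
      ?_ ?_ ?_
    · exact ((isOpen_lt continuous_const continuous_fst).and
        (isOpen_lt continuous_fst continuous_const)).and
        (isOpen_lt (continuous_const.add (continuous_fst.mul (hdc.comp continuous_snd)))
          continuous_const)
    · exact ⟨⟨h1, h2⟩, hcneg⟩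
    · intro s w hsw x heqx
      obtain ⟨⟨hs1, hs2⟩, hwneg⟩ := hsw
      obtain ⟨sA, sB, sC, sm0, sp0⟩ := hsign s ⟨hs1, hs2.le⟩
      have hw1 : ηm s ≤ w := by
        rcases lt_trichotomy w (ηm s) with hl | he | hg'
        · exact absurd (sA w hl) (by linarith)
        · exact he.ge
        · exact hg'.le
      have hw2 : w ≤ ηp s := by
        rcases lt_trichotomy (ηp s) w with hl | he | hg'
        · exact absurd (sB w hl) (by linarith)
        · exact he.ge
        · exact hg'.le
      exact hy0 s x w hs1 hs2.le heqx hw1 hw2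
  · -- ContinuousOn y0
    refine st13_cont hgc (e1 := fun q : ℝ × ℝ => ηm q.1)
      (e2 := fun q : ℝ × ℝ => ηp q.1) ?_ ?_ ?_ ?_ ?_
    · exact hetam.comp continuous_fst.continuousOn (fun q hq => ⟨hq.1, hq.2.1⟩)
    · exact hetap.comp continuous_fst.continuousOn (fun q hq => ⟨hq.1, hq.2.1⟩)
    · intro q hq
      exact (spec0 q.1 hq.1 hq.2.1 q.2 hq.2.2.1 hq.2.2.2).1
    · intro q hq
      exact (spec0 q.1 hq.1 hq.2.1 q.2 hq.2.2.1 hq.2.2.2).2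
    · intro q hq w hw1 hw2 hweq
      exact (uniq0 q.1 hq.1 hq.2.1 q.2 w hweq hw1 hw2).symm
  · -- ContDiffOn yp
    intro q hq
    obtain ⟨h1, h2, h3⟩ := hq
    apply ContDiffAt.contDiffWithinAt
    obtain ⟨hle0, heq0⟩ := specp q.1 h1.le h2.le q.2 h3.le
    obtain ⟨kA, kB, kC, hm0, hp0⟩ := hsign q.1 ⟨h1, h2.le⟩
    have hstrict : ηp q.1 < yp q.1 q.2 := by
      rcases eq_or_lt_of_le hle0 with he | hl
      · exfalso
        rw [← he] at heq0
        rw [hxp] at h3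
        linarith
      · exact hl
    have hcpos : 0 < 1 + q.1 * deriv g (yp q.1 q.2) := kB _ hstrict
    refine st13_cdAt hg heq0 (ne_of_gt hcpos)
      (V := {r : ℝ × ℝ | (1 < r.1 ∧ r.1 < 1 + ε₀) ∧ 0 < r.2 ∧ 0 < 1 + r.1 * deriv g r.2})
      ?_ ?_ ?_
    · exact ((isOpen_lt continuous_const continuous_fst).and
        (isOpen_lt continuous_fst continuous_const)).and
        ((isOpen_lt continuous_const continuous_snd).and
          (isOpen_lt continuous_const
            (continuous_const.add (continuous_fst.mul (hdc.comp continuous_snd)))))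
    · exact ⟨⟨h1, h2⟩, lt_trans hp0 hstrict, hcpos⟩
    · intro s w hsw x heqx
      obtain ⟨⟨hs1, hs2⟩, hw0, hwpos⟩ := hsw
      obtain ⟨sA, sB, sC, sm0, sp0⟩ := hsign s ⟨hs1, hs2.le⟩
      have hwle : ηp s ≤ w := by
        by_contra hge
        push_neg at hge
        have := sC w ⟨lt_trans sm0 hw0, hge⟩
        linarith
      exact hyp s x w hs1 hs2.le heqx hwle
  · -- ContinuousOn yp
    refine st13_cont hgc (e1 := fun q : ℝ × ℝ => ηp q.1)
      (e2 := fun q : ℝ × ℝ => q.2 + q.1 * M) ?_ ?_ ?_ ?_ ?_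
    · exact hetap.comp continuous_fst.continuousOn (fun q hq => ⟨hq.1, hq.2.1⟩)
    · exact (continuous_snd.add (continuous_fst.mul continuous_const)).continuousOn
    · intro q hq
      obtain ⟨h1, h2, h3⟩ := hq
      obtain ⟨hle, heq⟩ := specp q.1 h1 h2 q.2 h3
      refine ⟨hle, ?_⟩
      show yp q.1 q.2 ≤ q.2 + q.1 * M
      have hgb := (abs_le.1 (hM (yp q.1 q.2))).1
      have hmul : q.1 * (-M) ≤ q.1 * g (yp q.1 q.2) :=
        mul_le_mul_of_nonneg_left hgb (by linarith)
      nlinarith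
    · intro q hq
      exact (specp q.1 hq.1 hq.2.1 q.2 hq.2.2).2
    · intro q hq w hw1 _ hweq
      exact (uniqp q.1 hq.1 hq.2.1 q.2 w hweq hw1).symm
end

section
/- Under assumption (B_p), the map ξ ↦ ξ·e^{−ξ^{−p}} is an increasing bijection of [0,+∞) onto itself; let h denote its inverse (which satisfies h(x) = |ln x|^{−1/p} + O(|ln x|^{−1−1/p}·ln|ln x|) as x → 0+), and set ξ = sgn(x)·h(|x|), η = (t−1)·h(|x|)/|x|. Then there exist ε, δ > 0 such that: for 0 < ξ < δ and |η| < ε, y_+(t,x) = ξ·(1 + (ln p/p)·ξ^p + (1/p)·ξ^p·η) + O(ξ^{min{p+2,2p+1}} + ξ^{p+1}η²); and for −δ < ξ < 0 and |η| < ε, y_-(t,x) = ξ·(1 + (ln p/p)·|ξ|^p + (1/p)·|ξ|^p·η) + O(|ξ|^{min{p+2,2p+1}} + |ξ|^{p+1}η²). (When t ≤ 1, y_±(t,x) denotes the unique characteristic root y(t,x) of x = y + t·g(y) near 0.) -/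
open Real Filter Topology Set Asymptotics

/-- Quadratic Taylor bound for `u ↦ (1+u)^(-p)`. -/
lemma aux_theta {p : ℝ} (hp : 0 < p) (u : ℝ) (hu : |u| ≤ min (1/2) (1/(2*p))) :
    |1 - (1+u) ^ (-p) - p * u| ≤ (4*p^2 + 2*p) * u^2 := by
  have hu1 : |u| ≤ 1/2 := le_trans hu (min_le_left _ _)
  have hu2 : |u| ≤ 1/(2*p) := le_trans hu (min_le_right _ _)
  have h1u : (0:ℝ) < 1 + u := by
    have := abs_le.1 hu1; linarith [this.1]
  have hrw : (1+u) ^ (-p) = Real.exp (-p * Real.log (1+u)) := by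
    rw [Real.rpow_def_of_pos h1u]; ring_nf
  -- |log(1+u) - u| ≤ 2 u^2
  have hlog : |Real.log (1+u) - u| ≤ 2 * u^2 := by
    have hx : |(-u)| < 1 := by rw [abs_neg]; linarith [abs_le.1 hu1]
    have := Real.abs_log_sub_add_sum_range_le hx 1
    simp only [Finset.range_one, Finset.sum_singleton] at this
    have h2 : (1 : ℝ) - -u = 1 + u := by ring
    rw [h2] at this
    have h3 : |(-u)| ^ (1+1) / (1 - |(-u)|) ≤ 2 * u ^ 2 := by
      rw [abs_neg]
      have h4 : |u| ^ (1+1) = u ^ 2 := sq_abs u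
      have h5 : (1:ℝ) - |u| ≥ 1/2 := by linarith
      rw [h4]
      calc u^2 / (1 - |u|) ≤ u^2 / (1/2) :=
            div_le_div_of_nonneg_left (sq_nonneg u) (by norm_num) h5
        _ = 2 * u^2 := by ring
    have h7 : |Real.log (1+u) - u| = |(-u) ^ (0+1) / ((0:ℕ) + 1) + Real.log (1+u)| := by
      rw [show ((-u) ^ (0+1) / ((0:ℕ)+1) : ℝ) = -u by push_cast; ring]
      rw [show (-u + Real.log (1+u)) = Real.log (1+u) - u by ring]
    rw [h7]
    exact le_trans this h3
  set v := -p * Real.log (1+u) with hv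
  have hvb : |v| ≤ 1 := by
    have : |Real.log (1+u)| ≤ |u| + 2*u^2 := by
      have := abs_sub_abs_le_abs_sub (Real.log (1+u)) u
      have h8 := hlog
      calc |Real.log (1+u)| = |u + (Real.log (1+u) - u)| := by ring_nf
        _ ≤ |u| + |Real.log (1+u) - u| := abs_add_le _ _
        _ ≤ |u| + 2*u^2 := by linarith
    have h9 : 2*u^2 ≤ |u| := by
      nlinarith [abs_nonneg u, sq_abs u]
    have : |v| = p * |Real.log (1+u)| := by
      rw [hv, abs_mul, abs_neg, abs_of_pos hp]
    rw [this]
    calc p * |Real.log (1+u)| ≤ p * (2*|u|) := by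
          apply mul_le_mul_of_nonneg_left _ hp.le; linarith
      _ ≤ p * (2 * (1/(2*p))) := by
          apply mul_le_mul_of_nonneg_left _ hp.le; linarith
      _ = 1 := by field_simp
  have hexp : |Real.exp v - 1 - v| ≤ v^2 := Real.abs_exp_sub_one_sub_id_le hvb
  have hvsq : v^2 ≤ 4*p^2*u^2 := by
    have h10 : |v| ≤ 2*p*|u| := by
      have : |Real.log (1+u)| ≤ 2*|u| := by
        have := abs_add_le u (Real.log (1+u) - u)
        have h9 : 2*u^2 ≤ |u| := by nlinarith [abs_nonneg u, sq_abs u]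
        calc |Real.log (1+u)| = |u + (Real.log (1+u) - u)| := by ring_nf
          _ ≤ |u| + |Real.log (1+u) - u| := abs_add_le _ _
          _ ≤ |u| + 2*u^2 := by linarith
          _ ≤ 2*|u| := by linarith
      calc |v| = p * |Real.log (1+u)| := by rw [hv, abs_mul, abs_neg, abs_of_pos hp]
        _ ≤ p * (2*|u|) := mul_le_mul_of_nonneg_left this hp.le
        _ = 2*p*|u| := by ring
    calc v^2 = |v|^2 := (sq_abs v).symm
      _ ≤ (2*p*|u|)^2 := by
          apply pow_le_pow_left₀ (abs_nonneg v) h10 2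
      _ = 4*p^2*u^2 := by rw [mul_pow, mul_pow, sq_abs]; ring
  -- assemble
  have key : 1 - (1+u) ^ (-p) - p*u = -(Real.exp v - 1 - v) + p * (Real.log (1+u) - u) := by
    rw [hrw, hv]; ring
  rw [key]
  calc |(-(Real.exp v - 1 - v) + p * (Real.log (1+u) - u))|
      ≤ |(-(Real.exp v - 1 - v))| + |p * (Real.log (1+u) - u)| := abs_add_le _ _
    _ = |Real.exp v - 1 - v| + p * |Real.log (1+u) - u| := by
        rw [abs_neg, abs_mul, abs_of_pos hp]
    _ ≤ v^2 + p * (2*u^2) := by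
        have := mul_le_mul_of_nonneg_left hlog hp.le; linarith
    _ ≤ 4*p^2*u^2 + 2*p*u^2 := by linarith
    _ = (4*p^2 + 2*p)*u^2 := by ring

/-- Derivative of g at positive points, from the formula. -/
lemma derivg_pos {p : ℝ} (hp : 0 < p) {g r0 : ℝ → ℝ} (hr0 : ContDiff ℝ (⊤ : ℕ∞) r0)
    (hgf : ∀ x : ℝ, x ≠ 0 → g x = -x + Real.exp (-|x| ^ (-p)) * (x / p + r0 x))
    {w : ℝ} (hw : 0 < w) :
    deriv g w = -1 + Real.exp (-w^(-p)) * (w^(-p) + p * w^(-p-1) * r0 w + (1/p + deriv r0 w)) := by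
  have heq : g =ᶠ[𝓝 w] fun x => -x + Real.exp (-x ^ (-p)) * (x / p + r0 x) := by
    filter_upwards [Ioi_mem_nhds hw] with x hx
    rw [hgf x (ne_of_gt hx), abs_of_pos hx]
  rw [heq.deriv_eq]
  have h1 : HasDerivAt (fun x : ℝ => x ^ (-p)) (-p * w ^ (-p - 1)) w :=
    Real.hasDerivAt_rpow_const (Or.inl hw.ne')
  have h2 : HasDerivAt (fun x : ℝ => Real.exp (-x ^ (-p)))
      (Real.exp (-w^(-p)) * (p * w^(-p-1))) w := by
    have := h1.neg.exp
    convert this using 1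
    · rfl
    simp only [Pi.neg_apply]; ring
  have h3 : HasDerivAt (fun x : ℝ => x / p + r0 x) (1/p + deriv r0 w) w := by
    exact ((hasDerivAt_id w).div_const p).add ((hr0.differentiable (by simp) w).hasDerivAt)
  have h4 := h2.mul h3
  have h5 := (hasDerivAt_neg w).add h4
  rw [show deriv (fun x => -x + Real.exp (-x ^ (-p)) * (x / p + r0 x)) w = _ from h5.deriv]
  have hrp : w ^ (-p-1) * w = w ^ (-p) := by
    rw [← Real.rpow_add_one hw.ne' (-p-1)]; norm_num
  rw [← hrp]
  field_simp
  all_goals ring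

/-- Derivative of g at negative points, from the formula. -/
lemma derivg_neg {p : ℝ} (hp : 0 < p) {g r0 : ℝ → ℝ} (hr0 : ContDiff ℝ (⊤ : ℕ∞) r0)
    (hgf : ∀ x : ℝ, x ≠ 0 → g x = -x + Real.exp (-|x| ^ (-p)) * (x / p + r0 x))
    {w : ℝ} (hw : w < 0) :
    deriv g w = -1 + Real.exp (-(-w)^(-p)) *
      ((-w)^(-p) - p * (-w)^(-p-1) * r0 w + (1/p + deriv r0 w)) := by
  have hm : (0:ℝ) < -w := by linarith
  have heq : g =ᶠ[𝓝 w] fun x => -x + Real.exp (-(-x) ^ (-p)) * (x / p + r0 x) := by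
    filter_upwards [Iio_mem_nhds hw] with x hx
    rw [hgf x (ne_of_lt hx), abs_of_neg hx]
  rw [heq.deriv_eq]
  have h0 : HasDerivAt (fun x : ℝ => -x) (-1 : ℝ) w := (hasDerivAt_id w).neg
  have h1' : HasDerivAt (fun y : ℝ => y ^ (-p)) (-p * (-w) ^ (-p - 1)) (-w) :=
    Real.hasDerivAt_rpow_const (Or.inl hm.ne')
  have h1 : HasDerivAt (fun x : ℝ => (-x) ^ (-p)) (p * (-w) ^ (-p-1)) w := by
    have := h1'.comp w h0
    rw [show -p * (-w)^(-p-1) * -1 = p * (-w)^(-p-1) by ring] at this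
    exact this
  have h2 : HasDerivAt (fun x : ℝ => Real.exp (-(-x) ^ (-p)))
      (Real.exp (-(-w)^(-p)) * (-(p * (-w)^(-p-1)))) w := h1.neg.exp
  have h3 : HasDerivAt (fun x : ℝ => x / p + r0 x) (1/p + deriv r0 w) w :=
    ((hasDerivAt_id w).div_const p).add ((hr0.differentiable (by simp) w).hasDerivAt)
  have h4 := h2.mul h3
  have h5 := (hasDerivAt_neg w).add h4
  rw [show deriv (fun x => -x + Real.exp (-(-x) ^ (-p)) * (x / p + r0 x)) w = _ from h5.deriv]
  have hrp : (-w) ^ (-p-1) * (-w) = (-w) ^ (-p) := by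
    rw [← Real.rpow_add_one hm.ne' (-p-1)]; norm_num
  rw [← hrp]
  field_simp
  all_goals ring

/-- Lower bound for deriv g near 0. -/
lemma derivg_lb {p C0 : ℝ} (hp : 0 < p) (hC0 : 0 ≤ C0) {g r0 : ℝ → ℝ} (hr0 : ContDiff ℝ (⊤ : ℕ∞) r0)
    (hgf : ∀ x : ℝ, x ≠ 0 → g x = -x + Real.exp (-|x| ^ (-p)) * (x / p + r0 x))
    {a : ℝ} (ha : 0 < a) (haC : p * C0 * a ≤ 1/4) (haC2 : C0 * a ≤ 1/p)
    (hb : ∀ x : ℝ, |x| ≤ a → |r0 x| ≤ C0 * x^2 ∧ |deriv r0 x| ≤ C0 * |x|) :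
    ∀ y : ℝ, y ≠ 0 → |y| ≤ a → -1 + Real.exp (-|y|^(-p)) * (|y|^(-p)/2) ≤ deriv g y := by
  intro y hy hya
  have hw : 0 < |y| := abs_pos.mpr hy
  have hwp : 0 < |y| ^ (-p) := Real.rpow_pos_of_pos hw _
  have hwp1 : 0 < |y| ^ (-p-1) := Real.rpow_pos_of_pos hw _
  have hsq : |y| ^ (-p-1) * |y|^2 = |y| * |y|^(-p) := by
    rw [sq, ← mul_assoc, ← Real.rpow_add_one (ne_of_gt hw) (-p-1)]
    rw [show (-p-1+1 : ℝ) = -p by ring]; ring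
  have hr0y : |r0 y| ≤ C0 * |y|^2 := by
    have := (hb y hya).1; rwa [← sq_abs y] at this
  have hA : |p * |y|^(-p-1) * r0 y| ≤ (1/4) * |y|^(-p) := by
    rw [abs_mul, abs_of_nonneg (by positivity : (0:ℝ) ≤ p * |y|^(-p-1))]
    calc p * |y|^(-p-1) * |r0 y| ≤ p * |y|^(-p-1) * (C0 * |y|^2) := by
          apply mul_le_mul_of_nonneg_left hr0y (by positivity)
      _ = (p * C0 * |y|) * |y|^(-p) := by rw [show p * |y|^(-p-1) * (C0*|y|^2) = p * C0 * (|y|^(-p-1)*|y|^2) by ring, hsq]; ring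
      _ ≤ (1/4) * |y|^(-p) := by
          apply mul_le_mul_of_nonneg_right _ hwp.le
          calc p * C0 * |y| ≤ p * C0 * a := by
                apply mul_le_mul_of_nonneg_left hya (by positivity)
            _ ≤ 1/4 := haC
  have hB : |deriv r0 y| ≤ 1/p := by
    calc |deriv r0 y| ≤ C0 * |y| := (hb y hya).2
      _ ≤ C0 * a := mul_le_mul_of_nonneg_left hya hC0
      _ ≤ 1/p := haC2
  have hbr : ∀ s : ℝ, |s| ≤ (1/4) * |y|^(-p) →
      |y|^(-p)/2 ≤ |y|^(-p) + s + (1/p + deriv r0 y) := by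
    intro s hs
    have h1 := abs_le.1 hs
    have h2 := abs_le.1 hB
    have h3 : 0 < 1/p := by positivity
    linarith [h1.1, h2.1]
  rcases hy.lt_or_gt with hneg | hpos
  · rw [abs_of_neg hneg] at hA hbr ⊢
    rw [derivg_neg hp hr0 hgf hneg]
    have key := hbr (-(p * (-y)^(-p-1) * r0 y)) (by rwa [abs_neg])
    have h2 := mul_le_mul_of_nonneg_left key (Real.exp_pos (-(-y)^(-p))).le
    linarith [h2]
  · rw [abs_of_pos hpos] at hA hbr ⊢
    rw [derivg_pos hp hr0 hgf hpos]
    have key := hbr (p * y^(-p-1) * r0 y) hA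
    have h2 := mul_le_mul_of_nonneg_left key (Real.exp_pos (-y^(-p))).le
    linarith [h2]

set_option maxHeartbeats 2000000 in
/-- Core quantitative root lemma for the positive-side problem. -/
lemma core {p C0 a : ℝ} (hp : 0 < p) (hC0 : 0 ≤ C0) (ha : 0 < a)
    {G R : ℝ → ℝ} (hGc : Continuous G)
    (hform : ∀ w : ℝ, 0 < w → G w = -w + Real.exp (-w^(-p)) * (w/p + R w))
    (hR : ∀ w : ℝ, 0 ≤ w → w ≤ a → |R w| ≤ C0 * w^2)
    (hDG : ∀ w : ℝ, 0 < w → w ≤ a → -1 + Real.exp (-w^(-p)) * (w^(-p)/2) ≤ deriv G w) :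
    ∃ ε δ K : ℝ, 0 < ε ∧ ε ≤ 1/2 ∧ 0 < δ ∧ δ ≤ a/2 ∧ δ ≤ 1/2 ∧ 0 < K ∧
    ∀ ξ η t : ℝ, 0 < ξ → ξ < δ → |η| < ε → t = 1 + η * Real.exp (-ξ^(-p)) →
      ∃ z : ℝ, z + t * G z = ξ * Real.exp (-ξ^(-p)) ∧ ξ/2 ≤ z ∧ z ≤ 2*ξ ∧
        0 ≤ 1 + t * deriv G z ∧
        |z - ξ*(1 + (Real.log p/p)*ξ^p + (1/p)*ξ^p*η)| ≤
          K*(ξ^(min (p+2) (2*p+1)) + ξ^(p+1)*η^2) := by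
  obtain ⟨q, hqdef⟩ : ∃ x : ℝ, x = min 1 p := ⟨_, rfl⟩
  have hq : 0 < q := by rw [hqdef]; exact lt_min one_pos hp
  have hq1 : q ≤ 1 := by rw [hqdef]; exact min_le_left _ _
  have hqp : q ≤ p := by rw [hqdef]; exact min_le_right _ _
  obtain ⟨B, hBdef⟩ : ∃ x : ℝ, x = (|Real.log p| + 1)/p := ⟨_, rfl⟩
  have hB : 0 < B := by rw [hBdef]; positivity
  obtain ⟨Cθ, hCtdef⟩ : ∃ x : ℝ, x = 4*p^2 + 2*p := ⟨_, rfl⟩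
  have hCθ : 0 < Cθ := by rw [hCtdef]; positivity
  obtain ⟨C7, hC7def⟩ : ∃ x : ℝ, x = Cθ*(B+1)^2 := ⟨_, rfl⟩
  have hC7 : 0 < C7 := by rw [hC7def]; positivity
  obtain ⟨Cρ, hCρdef⟩ : ∃ x : ℝ, x = 4*p*C0 := ⟨_, rfl⟩
  have hCρ : 0 ≤ Cρ := by rw [hCρdef]; positivity
  obtain ⟨Cs, hCsdef⟩ : ∃ x : ℝ, x = C7 + Cρ + B + 1 := ⟨_, rfl⟩
  have hCs : 0 < Cs := by rw [hCsdef]; positivity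
  have hCs1 : B + 1 ≤ Cs := by rw [hCsdef]; linarith
  have hCs2 : 1 ≤ Cs := by linarith
  obtain ⟨K, hKdef⟩ : ∃ x : ℝ, x = C7 + 7*Cs + 10 := ⟨_, rfl⟩
  have hK : 0 < K := by rw [hKdef]; positivity
  have hK10 : 10 ≤ K := by rw [hKdef]; linarith
  obtain ⟨C10, hC10def⟩ : ∃ x : ℝ, x = (p + Cθ*(B+1))*(B+1) := ⟨_, rfl⟩
  have hC10 : 0 < C10 := by rw [hC10def]; positivity
  have hden : 0 < K + K/p + 2*C7 + Cs + 1 := by positivity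
  obtain ⟨E1, hE1def⟩ : ∃ x : ℝ, x = 1/(K + K/p + 2*C7 + Cs + 1) := ⟨_, rfl⟩
  have hE1 : 0 < E1 := by rw [hE1def]; positivity
  have hKp0 : 0 ≤ K/p := by positivity
  have hE1le : E1 ≤ 1/2 := by
    rw [hE1def, div_le_div_iff₀ hden (by norm_num)]
    linarith
  have hE1K : E1 * K ≤ 1 := by
    rw [hE1def, div_mul_eq_mul_div, one_mul, div_le_one hden]; linarith
  have hE1Kp : E1 * (K/p) ≤ 1 := by
    rw [hE1def, div_mul_eq_mul_div, one_mul, div_le_one hden]; linarith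
  have hE1C7 : E1 * C7 ≤ 1/2 := by
    rw [hE1def, div_mul_eq_mul_div, one_mul, div_le_div_iff₀ hden (by norm_num)]; linarith
  have hE1Cs : E1 * Cs ≤ 1 := by
    rw [hE1def, div_mul_eq_mul_div, one_mul, div_le_one hden]; linarith
  obtain ⟨uth, huthdef⟩ : ∃ x : ℝ, x = min (1/2:ℝ) (1/(2*p)) := ⟨_, rfl⟩
  have huth : 0 < uth := by rw [huthdef]; exact lt_min (by norm_num) (by positivity)
  obtain ⟨εv, hεdef⟩ : ∃ x : ℝ, x = min (1/2:ℝ) (Real.sqrt (E1/2)) := ⟨_, rfl⟩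
  have hεv : 0 < εv := by
    rw [hεdef]; exact lt_min (by norm_num) (Real.sqrt_pos.2 (by positivity))
  have hεvle : εv ≤ Real.sqrt (E1/2) := by rw [hεdef]; exact min_le_right _ _
  have hεv2 : εv^2 ≤ E1/2 := by
    calc εv^2 ≤ (Real.sqrt (E1/2))^2 :=
          pow_le_pow_left₀ hεv.le hεvle 2
      _ = E1/2 := Real.sq_sqrt (by positivity)
  -- choose δ
  obtain ⟨δ, hδmem, hδa, hδhalf, hδq, hδp1, hδp2, hδp3⟩ :
      ∃ δ : ℝ, δ ∈ Ioi (0:ℝ) ∧ δ ≤ a/2 ∧ δ ≤ 1/2 ∧ δ^q ≤ E1/2 ∧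
        (B+1)*δ^p ≤ uth ∧ (B+1)*δ^p ≤ 1/2 ∧ δ^p ≤ Real.exp (-C10) * (2:ℝ)^(-p) / 4 := by
    have hid : Tendsto (fun x : ℝ => x) (𝓝[>] (0:ℝ)) (𝓝 0) :=
      tendsto_id.mono_right nhdsWithin_le_nhds
    have htq : Tendsto (fun x : ℝ => x^q) (𝓝[>] (0:ℝ)) (𝓝 0) := by
      have hc := (Real.continuousAt_rpow_const 0 q (Or.inr hq.le)).tendsto
      rw [Real.zero_rpow hq.ne'] at hc
      exact hc.mono_left nhdsWithin_le_nhds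
    have htp : Tendsto (fun x : ℝ => x^p) (𝓝[>] (0:ℝ)) (𝓝 0) := by
      have hc := (Real.continuousAt_rpow_const 0 p (Or.inr hp.le)).tendsto
      rw [Real.zero_rpow hp.ne'] at hc
      exact hc.mono_left nhdsWithin_le_nhds
    have htp2 : Tendsto (fun x : ℝ => (B+1)*x^p) (𝓝[>] (0:ℝ)) (𝓝 0) := by
      simpa using htp.const_mul (B+1)
    have e0 : ∀ᶠ x : ℝ in 𝓝[>] (0:ℝ), x ∈ Ioi (0:ℝ) := self_mem_nhdsWithin
    have e1 := hid.eventually_le_const (by positivity : (0:ℝ) < a/2)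
    have e2 := hid.eventually_le_const (by norm_num : (0:ℝ) < 1/2)
    have e3 := htq.eventually_le_const (by positivity : (0:ℝ) < E1/2)
    have e4 := htp2.eventually_le_const huth
    have e5 := htp2.eventually_le_const (by norm_num : (0:ℝ) < 1/2)
    have e6 := htp.eventually_le_const
      (by positivity : (0:ℝ) < Real.exp (-C10) * (2:ℝ)^(-p) / 4)
    exact (e0.and (e1.and (e2.and (e3.and (e4.and (e5.and e6)))))).exists.imp
      (fun δ h => ⟨h.1, h.2.1, h.2.2.1, h.2.2.2.1, h.2.2.2.2.1, h.2.2.2.2.2.1, h.2.2.2.2.2.2⟩)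
  have hδ0 : 0 < δ := hδmem
  refine ⟨εv, δ, K/p, hεv, by rw [hεdef]; exact min_le_left _ _, hδ0, hδa, hδhalf, by positivity, ?_⟩
  intro ξ η t hξ hξδ hη ht
  -- basic facts
  have hη12 : |η| ≤ 1/2 := hη.le.trans (by rw [hεdef]; exact min_le_left _ _)
  have hηa := abs_le.1 hη12
  have hξ1 : ξ ≤ 1 := by linarith only [hξδ, hδhalf]
  have hξa2 : 2*ξ ≤ a := by linarith only [hξδ, hδa]
  have hξne : ξ ≠ 0 := ne_of_gt hξ
  have hpne : p ≠ 0 := ne_of_gt hp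
  have hc1 : 0 < Real.exp (-ξ^(-p)) := Real.exp_pos _
  have hξp : 0 < ξ^p := Real.rpow_pos_of_pos hξ p
  have hξqpos : 0 < ξ^q := Real.rpow_pos_of_pos hξ q
  have hξnp : 0 < ξ^(-p) := Real.rpow_pos_of_pos hξ _
  have hca : ξ^(-p) * ξ^p = 1 := by
    rw [← Real.rpow_add hξ]; norm_num
  have hξpq : ξ^p ≤ ξ^q := Real.rpow_le_rpow_of_exponent_ge hξ hξ1 hqp
  have hξq1 : ξ ≤ ξ^q := by
    calc ξ = ξ^(1:ℝ) := (Real.rpow_one ξ).symm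
      _ ≤ ξ^q := Real.rpow_le_rpow_of_exponent_ge hξ hξ1 hq1
  have hξp1 : ξ^p ≤ 1 := Real.rpow_le_one hξ.le hξ1 hp.le
  obtain ⟨E, hEdef⟩ : ∃ x : ℝ, x = ξ^q + η^2 := ⟨_, rfl⟩
  have hE0 : 0 < E := by rw [hEdef]; positivity
  have hη2E : η^2 ≤ E := by rw [hEdef]; linarith only [hξqpos]
  have hEE1 : E ≤ E1 := by
    have h1 : ξ^q ≤ δ^q := Real.rpow_le_rpow hξ.le hξδ.le hq.le
    have h2 : η^2 ≤ εv^2 := by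
      have h3 := pow_le_pow_left₀ (abs_nonneg η) hη.le 2
      rwa [sq_abs] at h3
    rw [hEdef]; linarith only [hδq, hεv2, h1, h2]
  have hEhalf : E ≤ 1/2 := hEE1.trans hE1le
  have hKE : K*E ≤ 1 := by
    linarith only [hE1K, mul_nonneg hK.le (sub_nonneg.2 hEE1)]
  have hKpE : (K/p)*E ≤ 1 := by
    linarith only [hE1Kp, mul_nonneg hKp0 (sub_nonneg.2 hEE1)]
  have hC7E : C7*E ≤ 1/2 := by
    linarith only [hE1C7, mul_nonneg hC7.le (sub_nonneg.2 hEE1)]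
  have hCsE : Cs*E ≤ 1 := by
    linarith only [hE1Cs, mul_nonneg hCs.le (sub_nonneg.2 hEE1)]
  have hξpE : ξ^p ≤ E := by rw [hEdef]; linarith only [hξpq, sq_nonneg η]
  have hξE : ξ ≤ E := by rw [hEdef]; linarith only [hξq1, sq_nonneg η]
  -- |η exp(-ξ^{-p})| ≤ E
  have hexple : Real.exp (-ξ^(-p)) ≤ ξ^p := by
    have h2 : ξ^(-p) + 1 ≤ Real.exp (ξ^(-p)) := Real.add_one_le_exp _
    have h3 : Real.exp (-ξ^(-p)) * Real.exp (ξ^(-p)) = 1 := by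
      rw [← Real.exp_add]; norm_num
    have h5 : Real.exp (-ξ^(-p)) * ξ^(-p) ≤ 1 := by
      calc Real.exp (-ξ^(-p)) * ξ^(-p) ≤ Real.exp (-ξ^(-p)) * Real.exp (ξ^(-p)) :=
            mul_le_mul_of_nonneg_left (by linarith only [h2]) (Real.exp_pos _).le
        _ = 1 := h3
    have h7 := mul_le_mul_of_nonneg_right h5 hξp.le
    rw [mul_assoc, hca, mul_one, one_mul] at h7
    exact h7
  have hexp1 : Real.exp (-ξ^(-p)) ≤ 1 := Real.exp_le_one_iff.2 (by linarith only [hξnp])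
  have hμ : |η * Real.exp (-ξ^(-p))| ≤ E := by
    rw [abs_mul, abs_of_pos hc1, hEdef]
    have h1 : Real.exp (-ξ^(-p)) ≤ ξ^q := le_trans hexple hξpq
    nlinarith only [sq_nonneg (|η| - Real.exp (-ξ^(-p))), sq_abs η, hc1.le, hexp1, h1,
      mul_nonneg (abs_nonneg η) hc1.le, hξqpos.le, sq_nonneg η]
  have htl : 1 - E ≤ t := by
    rw [ht]; have h1 := (abs_le.1 hμ).1; linarith only [h1]
  have htu : t ≤ 1 + E := by
    rw [ht]; have h1 := (abs_le.1 hμ).2; linarith only [h1]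
  have ht12 : 1/2 ≤ t := by linarith only [htl, hEhalf]
  have ht0 : 0 ≤ t := by linarith only [ht12]
  have h0η : (0:ℝ) ≤ 1+η := by linarith only [hηa.1]
  -- the u-window
  obtain ⟨u0, hu0def⟩ : ∃ x : ℝ, x = ((Real.log p + η)/p) * ξ^p := ⟨_, rfl⟩
  obtain ⟨d, hddef⟩ : ∃ x : ℝ, x = (K/p) * ξ^p * E := ⟨_, rfl⟩
  have hd0 : 0 < d := by rw [hddef]; positivity
  have hu0b : |u0| ≤ B*ξ^p := by
    rw [hu0def, abs_mul, abs_of_pos hξp, abs_div, abs_of_pos hp, hBdef]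
    have h1 : |Real.log p + η| ≤ |Real.log p| + 1 :=
      le_trans (abs_add_le _ _) (by linarith only [hη12])
    gcongr
  have hdp : d ≤ ξ^p := by
    rw [hddef]
    calc (K/p)*ξ^p*E = ((K/p)*E)*ξ^p := by ring
      _ ≤ 1*ξ^p := mul_le_mul_of_nonneg_right hKpE hξp.le
      _ = ξ^p := one_mul _
  obtain ⟨um, humdef⟩ : ∃ x : ℝ, x = u0 - d := ⟨_, rfl⟩
  obtain ⟨upp, huppdef⟩ : ∃ x : ℝ, x = u0 + d := ⟨_, rfl⟩
  have humb : |um| ≤ (B+1)*ξ^p := by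
    rw [humdef]
    calc |u0 - d| ≤ |u0| + |d| := abs_sub _ _
      _ ≤ B*ξ^p + ξ^p := by rw [abs_of_pos hd0]; linarith only [hu0b, hdp]
      _ = (B+1)*ξ^p := by ring
  have huppb : |upp| ≤ (B+1)*ξ^p := by
    rw [huppdef]
    calc |u0 + d| ≤ |u0| + |d| := abs_add_le _ _
      _ ≤ B*ξ^p + ξ^p := by rw [abs_of_pos hd0]; linarith only [hu0b, hdp]
      _ = (B+1)*ξ^p := by ring
  have hξpδp : ξ^p ≤ δ^p := Real.rpow_le_rpow hξ.le hξδ.le hp.le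
  have hB1 : (0:ℝ) ≤ B+1 := by linarith only [hB]
  have hub1 : (B+1)*ξ^p ≤ uth :=
    le_trans (mul_le_mul_of_nonneg_left hξpδp hB1) hδp1
  have hub2 : (B+1)*ξ^p ≤ 1/2 :=
    le_trans (mul_le_mul_of_nonneg_left hξpδp hB1) hδp2
  have hup12 : |upp| ≤ 1/2 := huppb.trans hub2
  have hum12 : |um| ≤ 1/2 := humb.trans hub2
  have h1up : (0:ℝ) < 1 + upp := by
    have h1 := (abs_le.1 hup12).1; linarith only [h1]
  have h1um : (0:ℝ) < 1 + um := by
    have h1 := (abs_le.1 hum12).1; linarith only [h1]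
  -- tau bound
  have hτ : ∀ u : ℝ, |u| ≤ (B+1)*ξ^p → |ξ^(-p)*(1-(1+u)^(-p)-p*u)| ≤ C7*E := by
    intro u hu
    have huth' : |u| ≤ min (1/2) (1/(2*p)) := by
      have h1 := hu.trans hub1; rwa [huthdef] at h1
    have hθ := aux_theta hp u huth'
    rw [← hCtdef] at hθ
    have hu2 : u^2 ≤ ((B+1)*ξ^p)^2 := by
      nlinarith only [hu, abs_nonneg u, sq_abs u]
    rw [abs_mul, abs_of_pos hξnp]
    calc ξ^(-p) * |1-(1+u)^(-p)-p*u| ≤ ξ^(-p) * (Cθ*((B+1)*ξ^p)^2) := by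
          apply mul_le_mul_of_nonneg_left _ hξnp.le
          exact hθ.trans (by linarith only [mul_le_mul_of_nonneg_left hu2 hCθ.le])
      _ = C7 * ξ^p := by rw [hC7def]; linear_combination (Cθ*(B+1)^2*ξ^p) * hca
      _ ≤ C7*E := by linarith only [mul_le_mul_of_nonneg_left hξpE hC7.le]
  obtain ⟨τP, hτPdef⟩ : ∃ x : ℝ, x = ξ^(-p)*(1-(1+upp)^(-p)-p*upp) := ⟨_, rfl⟩
  obtain ⟨τM, hτMdef⟩ : ∃ x : ℝ, x = ξ^(-p)*(1-(1+um)^(-p)-p*um) := ⟨_, rfl⟩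
  have hτPb : |τP| ≤ C7*E := by rw [hτPdef]; exact hτ upp huppb
  have hτMb : |τM| ≤ C7*E := by rw [hτMdef]; exact hτ um humb
  -- key algebraic identity
  have key : ∀ u : ℝ, -1 < u →
      ξ*(1+u) + t * G (ξ*(1+u)) - ξ*Real.exp (-ξ^(-p)) =
      Real.exp (-ξ^(-p)) * ξ *
        (t * Real.exp (ξ^(-p)*(1-(1+u)^(-p))) * ((1+u)/p + R (ξ*(1+u))/ξ) - 1 - η*(1+u)) := by
    intro u hu
    have h1u : (0:ℝ) < 1+u := by linarith only [hu]
    have hz0 : 0 < ξ*(1+u) := by positivity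
    rw [hform _ hz0, Real.mul_rpow hξ.le h1u.le]
    rw [show -(ξ^(-p) * (1+u)^(-p)) = (-ξ^(-p)) + ξ^(-p)*(1-(1+u)^(-p)) by ring]
    rw [Real.exp_add, ht]
    field_simp
    ring
  -- exponentials at the endpoints
  have hsvalP : ξ^(-p)*(1-(1+upp)^(-p)) = Real.log p + (η + K*E + τP) := by
    have h1 : p*upp = (Real.log p + η)*ξ^p + K*ξ^p*E := by
      rw [huppdef, hu0def, hddef]; field_simp
    rw [hτPdef]
    linear_combination ξ^(-p) * h1 + (Real.log p + η + K*E) * hca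
  have hsvalM : ξ^(-p)*(1-(1+um)^(-p)) = Real.log p + (η - K*E + τM) := by
    have h1 : p*um = (Real.log p + η)*ξ^p - K*ξ^p*E := by
      rw [humdef, hu0def, hddef]; field_simp
    rw [hτMdef]
    linear_combination ξ^(-p) * h1 + (Real.log p + η - K*E) * hca
  have hexpP : Real.exp (ξ^(-p)*(1-(1+upp)^(-p))) = p * Real.exp (η + K*E + τP) := by
    rw [hsvalP, Real.exp_add, Real.exp_log hp]
  have hexpM : Real.exp (ξ^(-p)*(1-(1+um)^(-p))) = p * Real.exp (η - K*E + τM) := by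
    rw [hsvalM, Real.exp_add, Real.exp_log hp]
  -- rho bounds
  have hρ : ∀ u : ℝ, |u| ≤ 1/2 → |p * R (ξ*(1+u)) / ξ| ≤ Cρ*E := by
    intro u hu
    have hua := abs_le.1 hu
    have h1u : (0:ℝ) ≤ 1+u := by linarith only [hua.1]
    have hz0 : (0:ℝ) ≤ ξ*(1+u) := mul_nonneg hξ.le h1u
    have hza : ξ*(1+u) ≤ a := by
      have h2 : ξ*(1+u) ≤ ξ*(3/2) :=
        mul_le_mul_of_nonneg_left (by linarith only [hua.2]) hξ.le
      linarith only [h2, hξa2, hξ.le]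
    have hRz := hR _ hz0 hza
    have h4u : (1+u)^2 ≤ 4 := by nlinarith only [hua.1, hua.2]
    have hz2 : (ξ*(1+u))^2 ≤ 4*ξ^2 := by
      have h3 := mul_le_mul_of_nonneg_left h4u (sq_nonneg ξ)
      calc (ξ*(1+u))^2 = ξ^2*(1+u)^2 := by ring
        _ ≤ ξ^2*4 := h3
        _ = 4*ξ^2 := by ring
    rw [abs_div, abs_of_pos hξ, abs_mul, abs_of_pos hp, div_le_iff₀ hξ]
    have h0 : C0*(ξ*(1+u))^2 ≤ C0*(4*ξ^2) := mul_le_mul_of_nonneg_left hz2 hC0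
    calc p*|R (ξ*(1+u))| ≤ p*(C0*(4*ξ^2)) :=
          mul_le_mul_of_nonneg_left (hRz.trans h0) hp.le
      _ = (Cρ*ξ)*ξ := by rw [hCρdef]; ring
      _ ≤ (Cρ*E)*ξ := by
          have h5 : Cρ*ξ ≤ Cρ*E := mul_le_mul_of_nonneg_left hξE hCρ
          exact mul_le_mul_of_nonneg_right h5 hξ.le
  have hρP := hρ upp hup12
  have hρM := hρ um hum12
  have huppE : |upp| ≤ Cs*E := by
    calc |upp| ≤ (B+1)*ξ^p := huppb
      _ ≤ (B+1)*E := mul_le_mul_of_nonneg_left hξpE hB1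
      _ ≤ Cs*E := mul_le_mul_of_nonneg_right hCs1 hE0.le
  have humE : |um| ≤ Cs*E := by
    calc |um| ≤ (B+1)*ξ^p := humb
      _ ≤ (B+1)*E := mul_le_mul_of_nonneg_left hξpE hB1
      _ ≤ Cs*E := mul_le_mul_of_nonneg_right hCs1 hE0.le
  have hC7E0 : (0:ℝ) ≤ C7*E := mul_nonneg hC7.le hE0.le
  have hCsE0' : (0:ℝ) ≤ Cs*E := mul_nonneg hCs.le hE0.le
  have hJeq : (7*Cs+10)*E = K*E - C7*E := by rw [hKdef]; ring
  have hJE : (7*Cs+10)*E ≤ 1 := by linarith only [hJeq, hKE, hC7E0]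
  have hJE0 : (0:ℝ) ≤ (7*Cs+10)*E := by positivity
  have h1JE : (0:ℝ) < 1+(7*Cs+10)*E := by linarith only [hJE0]
  have hCsEE : Cs*E ≥ E := by
    linarith only [mul_le_mul_of_nonneg_right hCs2 hE0.le]
  -- upper endpoint sign
  have hWp : 1 + η*(1+upp) <
      t * Real.exp (ξ^(-p)*(1-(1+upp)^(-p))) * ((1+upp)/p + R (ξ*(1+upp))/ξ) := by
    rw [hexpP]
    have hid2 : t * (p * Real.exp (η + K*E + τP)) * ((1+upp)/p + R (ξ*(1+upp))/ξ)
        = t * Real.exp (η + K*E + τP) * ((1+upp) + p*R (ξ*(1+upp))/ξ) := by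
      field_simp
    rw [hid2]
    have hA1 : (1+η)*(1+(7*Cs+10)*E) ≤ Real.exp (η + K*E + τP) := by
      have e1 : (1:ℝ)+η ≤ Real.exp η := by linarith only [Real.add_one_le_exp η]
      have e2 : 1+(K*E+τP) ≤ Real.exp (K*E+τP) := by
        linarith only [Real.add_one_le_exp (K*E+τP)]
      have hτl : -(C7*E) ≤ τP := (abs_le.1 hτPb).1
      have h3 : 1+(7*Cs+10)*E ≤ 1+(K*E+τP) := by linarith only [hJeq, hτl]
      calc (1+η)*(1+(7*Cs+10)*E) ≤ (1+η)*(1+(K*E+τP)) := mul_le_mul_of_nonneg_left h3 h0η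
        _ ≤ Real.exp η * Real.exp (K*E+τP) :=
            mul_le_mul e1 e2 (by linarith only [h3, hJE0]) (Real.exp_pos _).le
        _ = Real.exp (η + (K*E+τP)) := (Real.exp_add _ _).symm
        _ = Real.exp (η + K*E + τP) := by ring_nf
    have h7s : (B+1)*E + Cρ*E ≤ Cs*E := by
      have h8 : Cs*E = C7*E + Cρ*E + (B+1)*E := by rw [hCsdef]; ring
      linarith only [h8, hC7E0]
    have hf3P : 1 - Cs*E ≤ (1+upp) + p*R (ξ*(1+upp))/ξ := by
      have h5 := (abs_le.1 huppE).1
      have h6 := (abs_le.1 hρP).1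
      linarith only [h5, h6, h7s, mul_le_mul_of_nonneg_left hξpE hB1,
        humb, (abs_le.1 (huppb.trans (mul_le_mul_of_nonneg_left hξpE hB1))).1]
    have hCsE0 : (0:ℝ) ≤ 1 - Cs*E := by linarith only [hCsE]
    have hchainP : (1-E)*((1+η)*(1+(7*Cs+10)*E))*(1-Cs*E) ≤
        t * Real.exp (η+K*E+τP) * ((1+upp) + p*R (ξ*(1+upp))/ξ) := by
      have m1 : (1-E)*((1+η)*(1+(7*Cs+10)*E)) ≤ t * Real.exp (η+K*E+τP) :=
        mul_le_mul htl hA1 (mul_nonneg h0η h1JE.le) ht0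
      exact mul_le_mul m1 hf3P hCsE0 (mul_nonneg ht0 (Real.exp_pos _).le)
    have h6 : η*upp ≤ Cs*E := by
      have h7 : η*upp ≤ |η * upp| := le_abs_self _
      have h8 : |η * upp| = |η| * |upp| := abs_mul _ _
      have h9 : |η| * |upp| ≤ 1*|upp| :=
        mul_le_mul_of_nonneg_right (by linarith only [hη12]) (abs_nonneg upp)
      linarith only [h7, h8, h9, huppE]
    have s1 : 1 - (1+Cs)*E ≤ (1-E)*(1-Cs*E) := by
      linarith only [mul_nonneg hCsE0' hE0.le]
    have s2 : 1 + (5*Cs+8)*E ≤ (1+(7*Cs+10)*E)*(1-(1+Cs)*E) := by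
      have h10 : (0:ℝ) ≤ (1+Cs)*E := by positivity
      linarith only [mul_le_mul_of_nonneg_right hJE h10]
    have s3 := mul_le_mul_of_nonneg_left s1 h1JE.le
    have s4 : 1 + (5*Cs+8)*E ≤ (1+(7*Cs+10)*E)*((1-E)*(1-Cs*E)) := by
      linarith only [s2, s3]
    have s5 := mul_le_mul_of_nonneg_left s4 h0η
    have hpr : (1:ℝ)/2 * ((5*Cs+8)*E) ≤ (1+η) * ((5*Cs+8)*E) :=
      mul_le_mul_of_nonneg_right (by linarith only [hηa.1]) (by positivity)
    linarith only [hchainP, s5, h6, hpr, hE0, hCsEE]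
  -- lower endpoint sign
  have hA2 : Real.exp (η - K*E + τM) * ((1-η) * (1+(7*Cs+10)*E)) ≤ 1 := by
    have e1 : Real.exp η * (1-η) ≤ 1 := by
      have h2 : Real.exp η * Real.exp (-η) = 1 := by rw [← Real.exp_add]; simp
      calc Real.exp η * (1-η) ≤ Real.exp η * Real.exp (-η) :=
            mul_le_mul_of_nonneg_left (by linarith only [Real.add_one_le_exp (-η)])
              (Real.exp_pos η).le
        _ = 1 := h2
    have e2 : Real.exp (-(K*E) + τM) * (1+(7*Cs+10)*E) ≤ 1 := by
      have hτl := (abs_le.1 hτMb).2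
      have h3 : -(K*E) + τM ≤ -((7*Cs+10)*E) := by linarith only [hJeq, hτl]
      have h4 : Real.exp (-(K*E) + τM) ≤ Real.exp (-((7*Cs+10)*E)) := Real.exp_le_exp.2 h3
      have h5 : Real.exp (-((7*Cs+10)*E)) * (1+(7*Cs+10)*E) ≤ 1 := by
        have h7 : Real.exp (-((7*Cs+10)*E)) * Real.exp ((7*Cs+10)*E) = 1 := by
          rw [← Real.exp_add]; simp
        calc Real.exp (-((7*Cs+10)*E)) * (1+(7*Cs+10)*E)
            ≤ Real.exp (-((7*Cs+10)*E)) * Real.exp ((7*Cs+10)*E) :=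
              mul_le_mul_of_nonneg_left
                (by linarith only [Real.add_one_le_exp ((7*Cs+10)*E)]) (Real.exp_pos _).le
          _ = 1 := h7
      calc Real.exp (-(K*E) + τM) * (1+(7*Cs+10)*E)
          ≤ Real.exp (-((7*Cs+10)*E)) * (1+(7*Cs+10)*E) :=
            mul_le_mul_of_nonneg_right h4 h1JE.le
        _ ≤ 1 := h5
    have hsplit : Real.exp (η - K*E + τM) = Real.exp η * Real.exp (-(K*E) + τM) := by
      rw [← Real.exp_add]; ring_nf
    calc Real.exp (η - K*E + τM) * ((1-η) * (1+(7*Cs+10)*E))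
        = (Real.exp η * (1-η)) * (Real.exp (-(K*E)+τM) * (1+(7*Cs+10)*E)) := by
          rw [hsplit]; ring
      _ ≤ 1*1 := mul_le_mul e1 e2 (mul_nonneg (Real.exp_pos _).le h1JE.le) (by norm_num)
      _ = 1 := by norm_num
  have h7s : (B+1)*E + Cρ*E ≤ Cs*E := by
    have h8 : Cs*E = C7*E + Cρ*E + (B+1)*E := by rw [hCsdef]; ring
    linarith only [h8, hC7E0]
  have hf3M : (1+um) + p*R (ξ*(1+um))/ξ ≤ 1 + Cs*E := by
    have h5 := (abs_le.1 (humb.trans (mul_le_mul_of_nonneg_left hξpE hB1))).2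
    have h6 := (abs_le.1 hρM).2
    linarith only [h5, h6, h7s]
  have hf3M0 : (0:ℝ) ≤ (1+um) + p*R (ξ*(1+um))/ξ := by
    have h5 := (abs_le.1 (humb.trans (mul_le_mul_of_nonneg_left hξpE hB1))).1
    have h6 := (abs_le.1 hρM).1
    linarith only [h5, h6, h7s, hCsE]
  have hWm : t * Real.exp (ξ^(-p)*(1-(1+um)^(-p))) * ((1+um)/p + R (ξ*(1+um))/ξ)
      < 1 + η*(1+um) := by
    rw [hexpM]
    have hid2 : t * (p * Real.exp (η - K*E + τM)) * ((1+um)/p + R (ξ*(1+um))/ξ)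
        = t * Real.exp (η - K*E + τM) * ((1+um) + p*R (ξ*(1+um))/ξ) := by
      field_simp
    rw [hid2]
    have hD0 : (0:ℝ) < (1-η)*(1+(7*Cs+10)*E) :=
      mul_pos (by linarith only [hηa.2]) h1JE
    have hQD : (t * Real.exp (η-K*E+τM) * ((1+um) + p*R (ξ*(1+um))/ξ)) * ((1-η)*(1+(7*Cs+10)*E))
        ≤ (1+E)*(1+Cs*E) := by
      have m1 : t * ((1+um) + p*R (ξ*(1+um))/ξ) ≤ (1+E)*(1+Cs*E) :=
        mul_le_mul htu hf3M hf3M0 (by linarith only [hE0])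
      calc (t * Real.exp (η-K*E+τM) * ((1+um) + p*R (ξ*(1+um))/ξ)) * ((1-η)*(1+(7*Cs+10)*E))
          = (t * ((1+um) + p*R (ξ*(1+um))/ξ)) *
            (Real.exp (η-K*E+τM) * ((1-η)*(1+(7*Cs+10)*E))) := by ring
        _ ≤ ((1+E)*(1+Cs*E)) * 1 := by
            apply mul_le_mul m1 hA2 (mul_nonneg (Real.exp_pos _).le hD0.le)
              (mul_nonneg (by linarith only [hE0]) (by linarith only [hCsE0']))
        _ = (1+E)*(1+Cs*E) := by norm_num
    have h6m : -(Cs*E) ≤ η*um := by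
      have h7 : -(η*um) ≤ |η * um| := neg_le_abs _
      have h8 : |η * um| = |η| * |um| := abs_mul _ _
      have h9 : |η| * |um| ≤ 1*|um| :=
        mul_le_mul_of_nonneg_right (by linarith only [hη12]) (abs_nonneg um)
      linarith only [h7, h8, h9, humE]
    have hTD : (1+E)*(1+Cs*E) < (1 + η*(1+um)) * ((1-η)*(1+(7*Cs+10)*E)) := by
      have l1 : (1+η-Cs*E)*((1-η)*(1+(7*Cs+10)*E)) ≤ (1+η*(1+um))*((1-η)*(1+(7*Cs+10)*E)) :=
        mul_le_mul_of_nonneg_right (by linarith only [h6m]) hD0.le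
      have l2a : 1 - E - (3/2)*(Cs*E) ≤ (1+η-Cs*E)*(1-η) := by
        have h10 : (0:ℝ) ≤ Cs*E*(η+1/2) :=
          mul_nonneg hCsE0' (by linarith only [hηa.1])
        nlinarith only [hη2E, h10]
      have l2b : 1 + (7*Cs+10)*E - 2*(E + (3/2)*(Cs*E)) ≤
          (1-E-(3/2)*(Cs*E))*(1+(7*Cs+10)*E) := by
        have h11 : (0:ℝ) ≤ E + (3/2)*(Cs*E) := by linarith only [hE0, hCsE0']
        linarith only [mul_le_mul_of_nonneg_right hJE h11]
      have l2c := mul_le_mul_of_nonneg_right l2a h1JE.le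
      have l3 : (1+E)*(1+Cs*E) ≤ 1 + E + Cs*E + (1/2)*(Cs*E) := by
        have h12 : (0:ℝ) ≤ Cs*E*(1/2-E) :=
          mul_nonneg hCsE0' (by linarith only [hEhalf])
        linarith only [h12]
      linarith only [l1, l2c, l2b, l3, hE0, hCsEE]
    exact (mul_lt_mul_iff_left₀ hD0).1 (hQD.trans_lt hTD)
  -- signs of φ at the endpoints
  have hsP : ξ*Real.exp (-ξ^(-p)) ≤ ξ*(1+upp) + t * G (ξ*(1+upp)) := by
    have hk := key upp (by linarith only [(abs_le.1 hup12).1])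
    have hW : 0 < t * Real.exp (ξ^(-p)*(1-(1+upp)^(-p))) * ((1+upp)/p + R (ξ*(1+upp))/ξ)
        - 1 - η*(1+upp) := by linarith only [hWp]
    linarith only [hk, mul_pos (mul_pos hc1 hξ) hW]
  have hsM : ξ*(1+um) + t * G (ξ*(1+um)) ≤ ξ*Real.exp (-ξ^(-p)) := by
    have hk := key um (by linarith only [(abs_le.1 hum12).1])
    have hW : t * Real.exp (ξ^(-p)*(1-(1+um)^(-p))) * ((1+um)/p + R (ξ*(1+um))/ξ)
        - 1 - η*(1+um) ≤ 0 := by linarith only [hWm]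
    linarith only [hk, mul_nonneg (mul_pos hc1 hξ).le (neg_nonneg.2 hW)]
  -- IVT
  have hcont : ContinuousOn (fun z => z + t * G z) (Icc (ξ*(1+um)) (ξ*(1+upp))) :=
    (continuous_id.add (continuous_const.mul hGc)).continuousOn
  have hle : ξ*(1+um) ≤ ξ*(1+upp) := by
    have h1 : um ≤ upp := by rw [humdef, huppdef]; linarith only [hd0]
    exact mul_le_mul_of_nonneg_left (by linarith only [h1]) hξ.le
  have hmem : ξ*Real.exp (-ξ^(-p)) ∈
      Icc ((fun z => z + t*G z) (ξ*(1+um))) ((fun z => z + t*G z) (ξ*(1+upp))) := ⟨hsM, hsP⟩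
  obtain ⟨z, hzIcc, hzval⟩ := intermediate_value_Icc hle hcont hmem
  have hzl : ξ/2 ≤ z := by
    have h1 := hzIcc.1
    have h2 : (0:ℝ) ≤ ξ*(um+1/2) :=
      mul_nonneg hξ.le (by linarith only [(abs_le.1 hum12).1])
    linarith only [h1, h2]
  have hzu : z ≤ 2*ξ := by
    have h1 := hzIcc.2
    have h2 : (0:ℝ) ≤ ξ*(1-upp) :=
      mul_nonneg hξ.le (by linarith only [(abs_le.1 hup12).2])
    linarith only [h1, h2]
  have hz0 : 0 < z := lt_of_lt_of_le (by linarith only [hξ]) hzl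
  have hza : z ≤ a := le_trans hzu hξa2
  refine ⟨z, by simpa using hzval, hzl, hzu, ?_, ?_⟩
  · -- stability
    have hDGz := hDG z hz0 hza
    have h1 : t * (-1 + Real.exp (-z^(-p)) * (z^(-p)/2)) ≤ t * deriv G z :=
      mul_le_mul_of_nonneg_left hDGz ht0
    have hznp : 0 < z^(-p) := Real.rpow_pos_of_pos hz0 _
    have hzm : z^(-p) ≤ ξ^(-p) + C10 := by
      have hzmpos : 0 < ξ*(1+um) := by positivity
      have ha1 : z^(-p) ≤ (ξ*(1+um))^(-p) :=
        Real.rpow_le_rpow_of_nonpos hzmpos hzIcc.1 (by linarith only [hp])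
      have ha2 : (ξ*(1+um))^(-p) = ξ^(-p) * (1+um)^(-p) := Real.mul_rpow hξ.le h1um.le
      have ha3 : (1+um)^(-p) ≤ 1 + C10*ξ^p := by
        have huth' : |um| ≤ min (1/2) (1/(2*p)) := by
          have h2 := humb.trans hub1; rwa [huthdef] at h2
        have hθm := aux_theta hp um huth'
        rw [← hCtdef] at hθm
        have h5 := (abs_le.1 hθm).1
        have h7 : um^2 ≤ (B+1)^2*(ξ^p)^2 := by
          nlinarith only [humb, abs_nonneg um, sq_abs um]
        have h8 : -(p*um) ≤ p*((B+1)*ξ^p) := by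
          have h8a : -um ≤ (B+1)*ξ^p := by linarith only [(abs_le.1 humb).1]
          linarith only [mul_le_mul_of_nonneg_left h8a hp.le]
        have h9 : (ξ^p)^2 ≤ ξ^p := by
          linarith only [mul_nonneg (sub_nonneg.2 hξp1) hξp.le]
        have h10 := mul_le_mul_of_nonneg_left h7 hCθ.le
        have h11 := mul_le_mul_of_nonneg_left h9
          (by positivity : (0:ℝ) ≤ Cθ*(B+1)^2)
        rw [hC10def]
        linarith only [h5, h8, h10, h11]
      calc z^(-p) ≤ ξ^(-p)*(1+um)^(-p) := ha2 ▸ ha1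
        _ ≤ ξ^(-p)*(1+C10*ξ^p) := mul_le_mul_of_nonneg_left ha3 hξnp.le
        _ = ξ^(-p) + C10 := by linear_combination C10*hca
    have hz2p : (2:ℝ)^(-p)*ξ^(-p) ≤ z^(-p) := by
      have hb1 : (2*ξ)^(-p) ≤ z^(-p) :=
        Real.rpow_le_rpow_of_nonpos hz0 hzu (by linarith only [hp])
      rwa [Real.mul_rpow (by norm_num : (0:ℝ) ≤ 2) hξ.le] at hb1
    have hfz : Real.exp (-ξ^(-p)) * Real.exp (-C10) ≤ Real.exp (-z^(-p)) := by
      rw [← Real.exp_add]; exact Real.exp_le_exp.2 (by linarith only [hzm])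
    have hc2 : (2:ℝ)^(-p) * (2:ℝ)^p = 1 := by
      rw [← Real.rpow_add (by norm_num : (0:ℝ)<2)]; norm_num
    have hcE : Real.exp (-C10) * Real.exp C10 = 1 := by rw [← Real.exp_add]; simp
    have hl4 : 4 * Real.exp C10 * (2:ℝ)^p ≤ ξ^(-p) := by
      have hx1 : ξ^p ≤ Real.exp (-C10) * (2:ℝ)^(-p)/4 := le_trans hξpδp hδp3
      have h2 : (0:ℝ) < 4 * Real.exp C10 * (2:ℝ)^p := by positivity
      have h3 : (4 * Real.exp C10 * (2:ℝ)^p) * ξ^p ≤ 1 := by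
        calc (4 * Real.exp C10 * (2:ℝ)^p) * ξ^p
            ≤ (4 * Real.exp C10 * (2:ℝ)^p) * (Real.exp (-C10) * (2:ℝ)^(-p)/4) :=
              mul_le_mul_of_nonneg_left hx1 h2.le
          _ = (Real.exp (-C10) * Real.exp C10) * ((2:ℝ)^(-p) * (2:ℝ)^p) := by ring
          _ = 1 := by rw [hcE, hc2, one_mul]
      nlinarith only [h3, hca, hξp]
    have hXl : (Real.exp (-ξ^(-p)) * Real.exp (-C10)) * ((2:ℝ)^(-p)*ξ^(-p)/2)
        ≤ Real.exp (-z^(-p)) * (z^(-p)/2) := by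
      apply mul_le_mul hfz (by linarith only [hz2p]) (by positivity) (Real.exp_pos _).le
    have hZ : Real.exp (-ξ^(-p)) ≤ (1/2) * (Real.exp (-z^(-p)) * (z^(-p)/2)) := by
      have hq1' : Real.exp (-ξ^(-p)) * Real.exp (-C10) * ((2:ℝ)^(-p) * (4*Real.exp C10 * (2:ℝ)^p)) / 4
          = Real.exp (-ξ^(-p)) := by
        linear_combination (Real.exp (-ξ^(-p)) * ((2:ℝ)^(-p)*(2:ℝ)^p)) * hcE
          + Real.exp (-ξ^(-p)) * hc2
      calc Real.exp (-ξ^(-p))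
          = Real.exp (-ξ^(-p)) * Real.exp (-C10) * ((2:ℝ)^(-p) * (4*Real.exp C10 * (2:ℝ)^p)) / 4 :=
            hq1'.symm
        _ ≤ Real.exp (-ξ^(-p)) * Real.exp (-C10) * ((2:ℝ)^(-p) * ξ^(-p)) / 4 := by gcongr
        _ ≤ (1/2) * (Real.exp (-z^(-p)) * (z^(-p)/2)) := by linarith only [hXl]
    have h2' : -Real.exp (-ξ^(-p)) ≤ 1 - t := by
      rw [ht]
      linarith only [mul_le_mul_of_nonneg_right hηa.2 hc1.le, hc1.le]
    have hX0 : 0 ≤ Real.exp (-z^(-p)) * (z^(-p)/2) := by positivity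
    have h3' : (1/2) * (Real.exp (-z^(-p)) * (z^(-p)/2))
        ≤ t * (Real.exp (-z^(-p)) * (z^(-p)/2)) := mul_le_mul_of_nonneg_right ht12 hX0
    linarith only [h1, hZ, h2', h3']
  · -- error bound
    have hcen : ξ*(1 + (Real.log p/p)*ξ^p + (1/p)*ξ^p*η) = ξ*(1+u0) := by
      rw [hu0def]; ring
    have habs : |z - ξ*(1 + (Real.log p/p)*ξ^p + (1/p)*ξ^p*η)| ≤ ξ*d := by
      rw [hcen, abs_le]
      constructor
      · have h := hzIcc.1; rw [humdef] at h; linarith only [h]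
      · have h := hzIcc.2; rw [huppdef] at h; linarith only [h]
    have hmin : min (p+2) (2*p+1) = p+1+q := by
      rw [hqdef]
      rcases le_total p 1 with h|h
      · rw [min_eq_right (by linarith only [h] : 2*p+1 ≤ p+2), min_eq_right h]; ring
      · rw [min_eq_left (by linarith only [h] : p+2 ≤ 2*p+1), min_eq_left h]; ring
    have hfin : ξ*d = (K/p)*(ξ^(min (p+2) (2*p+1)) + ξ^(p+1)*η^2) := by
      rw [hmin, hddef, hEdef]
      have h1 : ξ^(p+1) = ξ^p * ξ := Real.rpow_add_one hξne p
      have h2 : ξ^(p+1+q) = ξ^(p+1) * ξ^q := Real.rpow_add hξ (p+1) q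
      rw [h2, h1]; ring
    exact le_trans habs (le_of_eq hfin)


lemma mono_F {p : ℝ} (hp : 0 < p) :
    StrictMonoOn (fun ξ : ℝ => ξ * Real.exp (-ξ ^ (-p))) (Ici 0) := by
  intro x hx y hy hxy
  rcases eq_or_lt_of_le (mem_Ici.1 hx) with rfl|hx'
  · have hy' : 0 < y := hxy
    simp only [zero_mul]
    positivity
  · have h1 : y^(-p) < x^(-p) := Real.rpow_lt_rpow_of_neg hx' hxy (by linarith)
    exact mul_lt_mul'' hxy (Real.exp_lt_exp.2 (by linarith)) hx'.le (Real.exp_pos _).le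

lemma image_F {p : ℝ} (hp : 0 < p) :
    (fun ξ : ℝ => ξ * Real.exp (-ξ ^ (-p))) '' Ici 0 = Ici 0 := by
  apply Subset.antisymm
  · rintro y ⟨ξ, hξ, rfl⟩
    exact mul_nonneg hξ (Real.exp_pos _).le
  · intro y hy
    rcases eq_or_lt_of_le (mem_Ici.1 hy) with rfl|hy'
    · exact ⟨0, mem_Ici.2 le_rfl, by simp⟩
    · obtain ⟨b, hb1, hby⟩ : ∃ b : ℝ, 1 ≤ b ∧ Real.exp 1 * y ≤ b :=
        ⟨max 1 (Real.exp 1 * y), le_max_left _ _, le_max_right _ _⟩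
      have hb0 : 0 < b := lt_of_lt_of_le one_pos hb1
      obtain ⟨a0, ha0, ha0y, ha0b⟩ : ∃ a0 : ℝ, 0 < a0 ∧ a0 ≤ y ∧ a0 ≤ b := by
        refine ⟨min y 1 / 2, by positivity, ?_, ?_⟩
        · have := min_le_left y 1; linarith [hy']
        · have := min_le_right y 1; linarith
      have hab : a0 ≤ b := ha0b
      have hcont : ContinuousOn (fun ξ : ℝ => ξ * Real.exp (-ξ ^ (-p))) (Icc a0 b) := by
        intro x hx
        have hx0 : x ≠ 0 := ne_of_gt (lt_of_lt_of_le ha0 hx.1)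
        exact (continuousAt_id.mul
          (((Real.continuousAt_rpow_const x (-p) (Or.inl hx0)).neg).rexp)).continuousWithinAt
      have hFa : a0 * Real.exp (-a0 ^ (-p)) ≤ y := by
        have h1 : Real.exp (-a0 ^ (-p)) ≤ 1 :=
          Real.exp_le_one_iff.2 (neg_nonpos.2 (Real.rpow_pos_of_pos ha0 _).le)
        calc a0 * Real.exp (-a0 ^ (-p)) ≤ a0 * 1 := mul_le_mul_of_nonneg_left h1 ha0.le
          _ = a0 := mul_one _
          _ ≤ y := ha0y
      have hFb : y ≤ b * Real.exp (-b ^ (-p)) := by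
        have h1 : b^(-p) ≤ 1 := Real.rpow_le_one_of_one_le_of_nonpos hb1 (by linarith)
        have h2 : Real.exp (-(1:ℝ)) ≤ Real.exp (-b^(-p)) := Real.exp_le_exp.2 (by linarith)
        have h3 : Real.exp 1 * y * Real.exp (-(1:ℝ)) ≤ b * Real.exp (-b^(-p)) :=
          mul_le_mul hby h2 (Real.exp_pos _).le hb0.le
        have h4 : Real.exp 1 * y * Real.exp (-(1:ℝ)) = y := by
          rw [mul_comm (Real.exp 1) y, mul_assoc, ← Real.exp_add]
          simp
        linarith
      obtain ⟨ξ, hξIcc, hξval⟩ := intermediate_value_Icc hab hcont ⟨hFa, hFb⟩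
      exact ⟨ξ, le_trans ha0.le hξIcc.1, hξval⟩

set_option maxHeartbeats 1000000 in
lemma h_asym {p : ℝ} (hp : 0 < p) (h : ℝ → ℝ)
    (hh : ∀ x : ℝ, 0 ≤ x → 0 ≤ h x ∧ h x * Real.exp (-(h x) ^ (-p)) = x) :
    (fun x => h x - |Real.log x| ^ (-(1:ℝ) / p)) =O[𝓝[>] (0 : ℝ)]
      fun x => |Real.log x| ^ (-(1:ℝ) - 1 / p) * Real.log |Real.log x| := by
  have hpne : p ≠ 0 := ne_of_gt hp
  have hexpneg : -(1:ℝ)/p ≤ 0 := by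
    rw [neg_div]; exact neg_nonpos.2 (by positivity)
  obtain ⟨L0, hL02, hL016⟩ : ∃ L0 : ℝ, 2 ≤ L0 ∧ 16/p^2 ≤ L0 :=
    ⟨max 2 (16/p^2), le_max_left _ _, le_max_right _ _⟩
  rw [Asymptotics.isBigO_iff]
  refine ⟨2 * Real.exp (1/p) / p^2, ?_⟩
  have hev : ∀ᶠ x : ℝ in 𝓝[>] (0:ℝ), x ≤ Real.exp (-L0) :=
    (tendsto_id.mono_right nhdsWithin_le_nhds).eventually_le_const (Real.exp_pos _)
  filter_upwards [hev, self_mem_nhdsWithin] with x hx1 hx2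
  have hx0 : (0:ℝ) < x := hx2
  obtain ⟨hξ0, hξeq⟩ := hh x hx0.le
  have hlogneg : Real.log x ≤ -L0 := by
    have := Real.log_le_log hx0 hx1
    rwa [Real.log_exp] at this
  have habsL : |Real.log x| = -Real.log x := abs_of_neg (by linarith)
  obtain ⟨L, hLdef⟩ : ∃ L : ℝ, L = -Real.log x := ⟨_, rfl⟩
  have hL2 : 2 ≤ L := by rw [hLdef]; linarith
  have hLpos : 0 < L := by linarith
  have hL16 : 16/p^2 ≤ L := by rw [hLdef]; linarith
  have hξpos : 0 < h x := by
    rcases hξ0.lt_or_eq with h'|h'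
    · exact h'
    · exfalso; rw [← h', zero_mul] at hξeq; linarith
  have hξ1 : h x ≤ 1 := by
    by_contra hgt
    push_neg at hgt
    have h1 : (h x)^(-p) ≤ 1 := Real.rpow_le_one_of_one_le_of_nonpos hgt.le (by linarith)
    have h2 : Real.exp (-(1:ℝ)) ≤ Real.exp (-(h x)^(-p)) := Real.exp_le_exp.2 (by linarith)
    have h3 : 1 * Real.exp (-(1:ℝ)) ≤ h x * Real.exp (-(h x)^(-p)) :=
      mul_le_mul hgt.le h2 (Real.exp_pos _).le (by linarith)
    have h4 : x ≤ Real.exp (-L0) := hx1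
    have h5 : Real.exp (-L0) < Real.exp (-(1:ℝ)) := Real.exp_lt_exp.2 (by linarith)
    rw [hξeq] at h3
    linarith
  have hlogξ0 : Real.log (h x) ≤ 0 := Real.log_nonpos hξ0 hξ1
  have hkey : (h x)^(-p) = L + Real.log (h x) := by
    have h1 : Real.log (h x) - (h x)^(-p) = Real.log x := by
      have h1' := congrArg Real.log hξeq
      rwa [Real.log_mul hξpos.ne' (Real.exp_ne_zero _), Real.log_exp, ← sub_eq_add_neg] at h1'
    rw [hLdef]; linarith
  have h1L : (h x)^(-p) ≤ L := by rw [hkey]; linarith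
  have hxip : 0 < (h x)^(-p) := Real.rpow_pos_of_pos hξpos _
  have hrp1 : ((h x)^(-p))^(-(1:ℝ)/p) = h x := by
    rw [← Real.rpow_mul hξpos.le, show (-p)*(-(1:ℝ)/p) = 1 by field_simp, Real.rpow_one]
  have h2 : L^(-(1:ℝ)/p) ≤ h x := by
    have ha := Real.rpow_le_rpow_of_nonpos hxip h1L hexpneg
    rwa [hrp1] at ha
  have h3 : -(Real.log L/p) ≤ Real.log (h x) := by
    have ha := Real.log_le_log (Real.rpow_pos_of_pos hLpos _) h2
    rwa [Real.log_rpow hLpos, show (-(1:ℝ)/p)*Real.log L = -(Real.log L/p) by ring] at ha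
  have hs0 : (0:ℝ) ≤ Real.log L := Real.log_nonneg (by linarith)
  -- 2 log L ≤ p L
  have hsq : Real.log L ≤ 2*Real.sqrt L := by
    have ha := Real.log_le_sub_one_of_pos (Real.sqrt_pos.2 hLpos)
    have hb : Real.log L = 2*Real.log (Real.sqrt L) := by
      conv_lhs => rw [← Real.sq_sqrt hLpos.le]
      rw [Real.log_pow]; push_cast; ring
    linarith [Real.sqrt_nonneg L]
  have ha' : 16 ≤ L*p^2 := (div_le_iff₀ (by positivity)).1 hL16
  have hb' : 4 ≤ p*Real.sqrt L := by
    by_contra hlt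
    push_neg at hlt
    have h0 : 0 ≤ p*Real.sqrt L := mul_nonneg hp.le (Real.sqrt_nonneg L)
    have h1 : (p*Real.sqrt L)*(p*Real.sqrt L) < 16 := by nlinarith only [hlt, h0]
    have h2 : (p*Real.sqrt L)*(p*Real.sqrt L) = p^2*L := by
      linear_combination (p^2) * (Real.sq_sqrt hLpos.le)
    linarith only [h1, h2, ha']
  have h7 : 4*Real.sqrt L ≤ p*L := by
    have h1 := mul_le_mul_of_nonneg_right hb' (Real.sqrt_nonneg L)
    have h2 : p*Real.sqrt L*Real.sqrt L = p*L := by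
      linear_combination p * (Real.sq_sqrt hLpos.le)
    linarith only [h1, h2]
  have hpL : 2*Real.log L ≤ p*L := by linarith
  have hsle : Real.log L/p ≤ L/2 := by
    rw [div_le_iff₀ hp]; nlinarith only [hpL, hp]
  -- upper bound for h x
  have hm1 : L - Real.log L/p ≤ (h x)^(-p) := by rw [hkey]; linarith
  have hm0 : 0 < L - Real.log L/p := by linarith
  have hup : h x ≤ (L - Real.log L/p)^(-(1:ℝ)/p) := by
    have ha := Real.rpow_le_rpow_of_nonpos hm0 hm1 hexpneg
    rwa [hrp1] at ha
  -- factor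
  obtain ⟨v, hvdef⟩ : ∃ v : ℝ, v = (Real.log L/p)/L := ⟨_, rfl⟩
  have hv0 : 0 ≤ v := by rw [hvdef]; positivity
  have hv2 : v ≤ 1/2 := by
    rw [hvdef, div_le_iff₀ hLpos]; nlinarith only [hsle, hLpos]
  have hfactor : L - Real.log L/p = L*(1-v) := by rw [hvdef]; field_simp
  have h1v : 0 < 1 - v := by linarith
  have hmulr : (L*(1-v))^(-(1:ℝ)/p) = L^(-(1:ℝ)/p)*(1-v)^(-(1:ℝ)/p) :=
    Real.mul_rpow hLpos.le h1v.le
  -- (1-v)^{-1/p} ≤ 1 + (2/p) v exp(1/p)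
  have hbound : (1-v)^(-(1:ℝ)/p) ≤ 1 + 2*Real.exp (1/p)/p * v := by
    have hle1 : Real.exp (-(2*v)) ≤ 1 - v := by
      have ha := Real.add_one_le_exp (2*v)
      have hb : Real.exp (-(2*v)) * Real.exp (2*v) = 1 := by rw [← Real.exp_add]; simp
      nlinarith only [ha, hb, hv0, hv2, Real.exp_pos (-(2*v)), Real.exp_pos (2*v)]
    have hlog1v : -(2*v) ≤ Real.log (1-v) := by
      have := Real.log_le_log (Real.exp_pos _) hle1
      rwa [Real.log_exp] at this
    have hlog1v' : Real.log (1-v) ≤ 0 := Real.log_nonpos h1v.le (by linarith)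
    rw [Real.rpow_def_of_pos h1v]
    obtain ⟨s, hsdef⟩ : ∃ s : ℝ, s = Real.log (1-v) * (-(1:ℝ)/p) := ⟨_, rfl⟩
    have hs0' : 0 ≤ s := by
      rw [hsdef]; nlinarith only [hlog1v', hexpneg]
    have hsM : s ≤ 2*v/p := by
      rw [hsdef]
      have h2v : -Real.log (1-v) ≤ 2*v := by linarith
      have h2w := mul_le_mul_of_nonneg_left h2v (by positivity : (0:ℝ) ≤ 1/p)
      have : Real.log (1-v) * (-(1:ℝ)/p) = (1/p) * (-Real.log (1-v)) := by ring
      rw [this]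
      have : (1/p) * (2*v) = 2*v/p := by ring
      linarith
    have hsM2 : s ≤ 1/p := by
      have hvp : 2*v/p ≤ 1/p := by gcongr; linarith
      linarith
    have hA : Real.exp s * (1-s) ≤ 1 := by
      have ha := Real.add_one_le_exp (-s)
      have hb : Real.exp s * Real.exp (-s) = 1 := by rw [← Real.exp_add]; simp
      have hc := mul_le_mul_of_nonneg_left
        (by linarith only [ha] : 1-s ≤ Real.exp (-s)) (Real.exp_pos s).le
      linarith only [hb, hc]
    have hB' : s * Real.exp s ≤ s * Real.exp (1/p) :=
      mul_le_mul_of_nonneg_left (Real.exp_le_exp.2 hsM2) hs0'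
    have hC' : s * Real.exp (1/p) ≤ 2*v/p * Real.exp (1/p) :=
      mul_le_mul_of_nonneg_right hsM (Real.exp_pos _).le
    have hgoal : Real.exp s ≤ 1 + 2*Real.exp (1/p)/p * v := by
      have : Real.exp s - 1 ≤ s * Real.exp s := by nlinarith only [hA]
      have h10 : 2*v/p * Real.exp (1/p) = 2*Real.exp (1/p)/p * v := by ring
      linarith only [this, hB', hC', h10.le, h10.ge]
    rw [← hsdef]
    exact hgoal
  -- conclude
  rw [Real.norm_eq_abs, Real.norm_eq_abs, habsL, ← hLdef]
  have hrpLpos : 0 < L^(-(1:ℝ)/p) := Real.rpow_pos_of_pos hLpos _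
  have hrpL2pos : 0 < L^(-(1:ℝ)-1/p) := Real.rpow_pos_of_pos hLpos _
  have hfin1 : h x - L^(-(1:ℝ)/p) ≤ L^(-(1:ℝ)/p) * (2*Real.exp (1/p)/p * v) := by
    have h11 := hup
    rw [hfactor, hmulr] at h11
    have h8 : L^(-(1:ℝ)/p)*(1-v)^(-(1:ℝ)/p) ≤ L^(-(1:ℝ)/p)*(1 + 2*Real.exp (1/p)/p*v) :=
      mul_le_mul_of_nonneg_left hbound hrpLpos.le
    linarith only [h11, h8]
  have hfin2 : L^(-(1:ℝ)/p) * (2*Real.exp (1/p)/p * v) =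
      2*Real.exp (1/p)/p^2 * (L^(-(1:ℝ)-1/p)*Real.log L) := by
    rw [hvdef]
    have h9 : L^(-(1:ℝ)-1/p) = L⁻¹ * L^(-(1:ℝ)/p) := by
      rw [show (-(1:ℝ)-1/p) = (-1) + (-(1:ℝ)/p) by ring, Real.rpow_add hLpos,
        Real.rpow_neg_one]
    rw [h9]; field_simp
  rw [abs_of_nonneg (by linarith only [h2] : (0:ℝ) ≤ h x - L^(-(1:ℝ)/p)),
    abs_of_nonneg (mul_nonneg hrpL2pos.le hs0)]
  linarith only [hfin1, hfin2.le, hfin2.ge]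




lemma r0_bounds {r0 : ℝ → ℝ}
    (hO : ∀ j : ℕ, j ≤ 2 → (fun x => iteratedDeriv j r0 x) =O[𝓝 (0:ℝ)] fun x => x ^ (2-j)) :
    ∃ a0 C0 : ℝ, 0 < a0 ∧ 0 ≤ C0 ∧
      ∀ x : ℝ, |x| ≤ a0 → |r0 x| ≤ C0*x^2 ∧ |deriv r0 x| ≤ C0*|x| := by
  have h0 := hO 0 (by norm_num)
  have h1 := hO 1 (by norm_num)
  rw [Asymptotics.isBigO_iff] at h0 h1
  obtain ⟨c0, hc0⟩ := h0
  obtain ⟨c1, hc1⟩ := h1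
  simp only [iteratedDeriv_zero] at hc0
  simp only [iteratedDeriv_one] at hc1
  have hcomb := hc0.and hc1
  rw [Metric.eventually_nhds_iff] at hcomb
  obtain ⟨ε', hε', hball⟩ := hcomb
  refine ⟨ε'/2, max (max c0 c1) 0, by linarith, le_max_right _ _, ?_⟩
  intro x hx
  have hd : dist x 0 < ε' := by
    rw [Real.dist_eq, sub_zero]; linarith [abs_nonneg x]
  obtain ⟨hb0, hb1⟩ := hball hd
  norm_num [Real.norm_eq_abs] at hb0 hb1
  constructor
  · have h2 : |x^2| = x^2 := by rw [abs_pow, sq_abs]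
    have h3 : c0 * |x^2| ≤ max (max c0 c1) 0 * x^2 := by
      rw [h2]
      exact mul_le_mul_of_nonneg_right (le_trans (le_max_left _ _) (le_max_left _ _))
        (sq_nonneg x)
    calc |r0 x| ≤ c0 * |x^2| := by
          have := hb0
          calc |r0 x| ≤ c0 * |x|^2 := by simpa [sq_abs] using this
            _ = c0 * |x^2| := by rw [h2, sq_abs]
      _ ≤ _ := h3
  · calc |deriv r0 x| ≤ c1 * |x| := hb1
      _ ≤ max (max c0 c1) 0 * |x| :=
        mul_le_mul_of_nonneg_right (le_trans (le_max_right _ _) (le_max_left _ _))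
          (abs_nonneg x)

set_option maxHeartbeats 2000000 in
/-- Under (B_p): `ξ ↦ ξ e^{-ξ^{-p}}` is an increasing bijection of `[0,∞)` onto itself;
its inverse `h` satisfies `h(x) = |ln x|^{-1/p} + O(|ln x|^{-1-1/p} ln|ln x|)` as `x → 0+`;
and, with `ξ = sgn(x) h(|x|)`, `η = (t-1)h(|x|)/|x|`, the characteristic roots satisfy
`y_±(t,x) = ξ(1 + (ln p/p)|ξ|^p + (1/p)|ξ|^p η) + O(|ξ|^{min{p+2,2p+1}} + |ξ|^{p+1}η²)`
for `0 < ±ξ < δ`, `|η| < ε`. For `t > 1`, `y₊`/`y₋` are the small positive/negative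
stable roots of `z + t g(z) = x`; for `t ≤ 1` both denote the unique small root. -/
theorem statement18 (p : ℝ) (g r0 : ℝ → ℝ) (hB : AssumptionB p g r0)
    (ε₀ δ₀ : ℝ) (hε₀ : 0 < ε₀) (hδ₀ : 0 < δ₀)
    (ym yp : ℝ → ℝ → ℝ)
    (hyp : ∀ t x z : ℝ, 1 < t → t < 1 + ε₀ → z + t * g z = x → 0 < z → z < δ₀ →
      0 ≤ 1 + t * deriv g z → yp t x = z)
    (hym : ∀ t x z : ℝ, 1 < t → t < 1 + ε₀ → z + t * g z = x → -δ₀ < z → z < 0 →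
      0 ≤ 1 + t * deriv g z → ym t x = z)
    (hyp' : ∀ t x z : ℝ, 1 - ε₀ < t → t ≤ 1 → z + t * g z = x → |z| < δ₀ → yp t x = z)
    (hym' : ∀ t x z : ℝ, 1 - ε₀ < t → t ≤ 1 → z + t * g z = x → |z| < δ₀ → ym t x = z) :
    -- the map F(ξ) = ξ e^{-ξ^{-p}} is an increasing bijection of [0,∞) onto itself
    StrictMonoOn (fun ξ : ℝ => ξ * Real.exp (-ξ ^ (-p))) (Ici 0) ∧
    (fun ξ : ℝ => ξ * Real.exp (-ξ ^ (-p))) '' Ici 0 = Ici 0 ∧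
    -- for any inverse h of F on [0,∞):
    ∀ h : ℝ → ℝ, (∀ x : ℝ, 0 ≤ x → 0 ≤ h x ∧ h x * Real.exp (-(h x) ^ (-p)) = x) →
      -- asymptotic of h
      ((fun x => h x - |Real.log x| ^ (-(1 : ℝ) / p)) =O[𝓝[>] (0 : ℝ)]
        fun x => |Real.log x| ^ (-(1 : ℝ) - 1 / p) * Real.log |Real.log x|) ∧
      -- expansions of y_± in the variables (η, ξ)
      ∃ ε δ C : ℝ, 0 < ε ∧ 0 < δ ∧ ε * δ < ε₀ ∧ δ ≤ δ₀ ∧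
        (∀ t x ξ η : ℝ, 0 < x → ξ = h x → η = (t - 1) * h x / x → ξ < δ → |η| < ε →
          |yp t x - ξ * (1 + (Real.log p / p) * ξ ^ p + (1 / p) * ξ ^ p * η)|
            ≤ C * (ξ ^ min (p + 2) (2 * p + 1) + ξ ^ (p + 1) * η ^ 2)) ∧
        (∀ t x ξ η : ℝ, x < 0 → ξ = -h (-x) → η = (t - 1) * h (-x) / (-x) →
          -δ < ξ → |η| < ε →
          |ym t x - ξ * (1 + (Real.log p / p) * |ξ| ^ p + (1 / p) * |ξ| ^ p * η)|
            ≤ C * (|ξ| ^ min (p + 2) (2 * p + 1) + |ξ| ^ (p + 1) * η ^ 2)) := by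
  obtain ⟨hp, hgC, hgb, hdg0, hdgm, hr0C, hr0b, hg0, hgf, hO, hO3⟩ := hB
  refine ⟨mono_F hp, image_F hp, ?_⟩
  intro h hh
  refine ⟨h_asym hp h hh, ?_⟩
  obtain ⟨a0, C0, ha0, hC0, hbnd⟩ := r0_bounds hO
  obtain ⟨a, hapos, haa0, haC⟩ : ∃ a : ℝ, 0 < a ∧ a ≤ a0 ∧ p*C0*a ≤ 1/4 := by
    refine ⟨min a0 (1/(4*p*C0+1)), lt_min ha0 (by positivity), min_le_left _ _, ?_⟩
    have h1 : min a0 (1/(4*p*C0+1)) ≤ 1/(4*p*C0+1) := min_le_right _ _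
    have h2 : (0:ℝ) < 4*p*C0+1 := by positivity
    have h3 : p*C0*(1/(4*p*C0+1)) ≤ 1/4 := by
      rw [mul_one_div, div_le_div_iff₀ h2 (by norm_num)]
      nlinarith only [mul_nonneg hp.le hC0]
    have h4 := mul_le_mul_of_nonneg_left h1 (mul_nonneg hp.le hC0)
    calc p*C0*min a0 (1/(4*p*C0+1)) ≤ p*C0*(1/(4*p*C0+1)) := h4
      _ ≤ 1/4 := h3
  have haC2 : C0*a ≤ 1/p := by
    rw [le_div_iff₀ hp]; nlinarith only [haC]
  have hbnd' : ∀ x : ℝ, |x| ≤ a → |r0 x| ≤ C0*x^2 ∧ |deriv r0 x| ≤ C0*|x| :=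
    fun x hx => hbnd x (le_trans hx haa0)
  have hDGb := derivg_lb hp hC0 hr0C hgf hapos haC haC2 hbnd'
  -- core for g
  have hformg : ∀ w : ℝ, 0 < w → g w = -w + Real.exp (-w^(-p)) * (w/p + r0 w) := by
    intro w hw; rw [hgf w (ne_of_gt hw), abs_of_pos hw]
  have hRg : ∀ w : ℝ, 0 ≤ w → w ≤ a → |r0 w| ≤ C0*w^2 := by
    intro w hw1 hw2
    exact (hbnd' w (by rwa [abs_of_nonneg hw1])).1
  have hDGg : ∀ w : ℝ, 0 < w → w ≤ a →
      -1 + Real.exp (-w^(-p)) * (w^(-p)/2) ≤ deriv g w := by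
    intro w hw1 hw2
    have h1 := hDGb w (ne_of_gt hw1) (by rwa [abs_of_pos hw1])
    rwa [abs_of_pos hw1] at h1
  obtain ⟨ε₁, δ₁, K₁, hε₁, hε₁2, hδ₁, hδ₁a, hδ₁2, hK₁, hcore1⟩ :=
    core hp hC0 hapos (hgC.continuous) hformg hRg hDGg
  -- core for the reflected problem
  have hG2c : Continuous (fun w : ℝ => -g (-w)) := (hgC.continuous.comp continuous_neg).neg
  have hform2 : ∀ w : ℝ, 0 < w →
      (fun w : ℝ => -g (-w)) w = -w + Real.exp (-w^(-p)) * (w/p + (fun w : ℝ => -r0 (-w)) w) := by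
    intro w hw
    simp only
    rw [hgf (-w) (neg_ne_zero.2 (ne_of_gt hw)), abs_neg, abs_of_pos hw]
    ring
  have hR2 : ∀ w : ℝ, 0 ≤ w → w ≤ a → |(fun w : ℝ => -r0 (-w)) w| ≤ C0*w^2 := by
    intro w hw1 hw2
    simp only [abs_neg]
    have h1 := (hbnd' (-w) (by rwa [abs_neg, abs_of_nonneg hw1])).1
    rwa [neg_sq] at h1
  have hderiv2 : ∀ w : ℝ, deriv (fun w : ℝ => -g (-w)) w = deriv g (-w) := by
    intro w
    have h1 : deriv (fun w : ℝ => -g (-w)) w = -deriv (fun w : ℝ => g (-w)) w := by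
      rw [← deriv.fun_neg]
    rw [h1, deriv_comp_neg]
    ring
  have hDG2 : ∀ w : ℝ, 0 < w → w ≤ a →
      -1 + Real.exp (-w^(-p)) * (w^(-p)/2) ≤ deriv (fun w : ℝ => -g (-w)) w := by
    intro w hw1 hw2
    rw [hderiv2]
    have h1 := hDGb (-w) (neg_ne_zero.2 (ne_of_gt hw1)) (by rwa [abs_neg, abs_of_pos hw1])
    rwa [abs_neg, abs_of_pos hw1] at h1
  obtain ⟨ε₂, δ₂, K₂, hε₂, hε₂2, hδ₂, hδ₂a, hδ₂2, hK₂, hcore2⟩ :=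
    core hp hC0 hapos hG2c hform2 hR2 hDG2
  -- final constants
  refine ⟨min (min ε₁ ε₂) (ε₀/2), min (min δ₁ δ₂) (min (δ₀/2) ε₀), max K₁ K₂,
    lt_min (lt_min hε₁ hε₂) (by linarith), lt_min (lt_min hδ₁ hδ₂) (lt_min (by linarith) hε₀),
    ?_, ?_, ?_, ?_⟩
  · have hεle : min (min ε₁ ε₂) (ε₀/2) ≤ 1/2 :=
      le_trans (min_le_left _ _) (le_trans (min_le_left _ _) hε₁2)
    have hδle : min (min δ₁ δ₂) (min (δ₀/2) ε₀) ≤ ε₀ :=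
      le_trans (min_le_right _ _) (min_le_right _ _)
    have hδpos : 0 < min (min δ₁ δ₂) (min (δ₀/2) ε₀) :=
      lt_min (lt_min hδ₁ hδ₂) (lt_min (by linarith) hε₀)
    have h1 := mul_le_mul_of_nonneg_right hεle hδpos.le
    linarith
  · exact le_trans (min_le_right _ _) (le_trans (min_le_left _ _) (by linarith))
  · -- positive side
    intro t x ξ η hx hξdef hηdef hξδ hηε
    obtain ⟨hh0, hheq⟩ := hh x hx.le
    have hξpos : 0 < h x := by
      rcases hh0.lt_or_eq with h'|h'
      · exact h'
      · exfalso; rw [← h', zero_mul] at hheq; linarith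
    subst hξdef
    have hξδ₁ : h x < δ₁ :=
      lt_of_lt_of_le hξδ (le_trans (min_le_left _ _) (min_le_left _ _))
    have hξδ₀ : h x < δ₀/2 :=
      lt_of_lt_of_le hξδ (le_trans (min_le_right _ _) (min_le_left _ _))
    have hηε₁ : |η| < ε₁ :=
      lt_of_lt_of_le hηε (le_trans (min_le_left _ _) (min_le_left _ _))
    have hηε₀ : |η| < ε₀/2 := lt_of_lt_of_le hηε (min_le_right _ _)
    have hxne : x ≠ 0 := ne_of_gt hx
    have ht' : t = 1 + η * Real.exp (-(h x)^(-p)) := by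
      have hμeq : η * Real.exp (-(h x)^(-p)) = t - 1 := by
        rw [hηdef, div_mul_eq_mul_div, div_eq_iff hxne]
        linear_combination (t-1)*hheq
      linarith only [hμeq]
    obtain ⟨z, hzeq, hzl, hzu, hzst, hzb⟩ := hcore1 (h x) η t hξpos hξδ₁ hηε₁ ht'
    rw [hheq] at hzeq
    have hzpos : 0 < z := lt_of_lt_of_le (by linarith) hzl
    have hzδ₀ : z < δ₀ := by linarith
    have hexple1 : Real.exp (-(h x)^(-p)) ≤ 1 :=
      Real.exp_le_one_iff.2 (neg_nonpos.2 (Real.rpow_pos_of_pos hξpos _).le)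
    have htb : |t-1| < ε₀ := by
      have h1 : t-1 = η * Real.exp (-(h x)^(-p)) := by rw [ht']; ring
      have h2 : |t-1| ≤ |η| := by
        rw [h1, abs_mul]
        calc |η| * |Real.exp (-(h x)^(-p))| ≤ |η| * 1 := by
              apply mul_le_mul_of_nonneg_left _ (abs_nonneg η)
              rw [abs_of_pos (Real.exp_pos _)]; exact hexple1
          _ = |η| := mul_one _
      linarith
    have htba := abs_lt.1 htb
    have hyval : yp t x = z := by
      rcases le_or_gt t 1 with hle|hlt
      · exact hyp' t x z (by linarith) hle hzeq (by rw [abs_of_pos hzpos]; exact hzδ₀)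
      · exact hyp t x z hlt (by linarith) hzeq hzpos hzδ₀ hzst
    rw [hyval]
    refine le_trans hzb (mul_le_mul_of_nonneg_right (le_max_left _ _) ?_)
    have h5 : 0 < (h x)^(min (p+2) (2*p+1)) := Real.rpow_pos_of_pos hξpos _
    have h6 : 0 ≤ (h x)^(p+1) * η^2 :=
      mul_nonneg (Real.rpow_pos_of_pos hξpos _).le (sq_nonneg η)
    linarith
  · -- negative side
    intro t x ξ η hx hξdef hηdef hξδ hηε
    have hx' : 0 < -x := by linarith
    obtain ⟨hh0, hheq⟩ := hh (-x) hx'.le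
    have hξpos : 0 < h (-x) := by
      rcases hh0.lt_or_eq with h'|h'
      · exact h'
      · exfalso; rw [← h', zero_mul] at hheq; linarith
    have hξeq2 : h (-x) = -ξ := by rw [hξdef]; ring
    have hξδ₂ : h (-x) < δ₂ := by
      have h1 : h (-x) < min (min δ₁ δ₂) (min (δ₀/2) ε₀) := by rw [hξeq2]; linarith
      exact lt_of_lt_of_le h1 (le_trans (min_le_left _ _) (min_le_right _ _))
    have hξδ₀ : h (-x) < δ₀/2 := by
      have h1 : h (-x) < min (min δ₁ δ₂) (min (δ₀/2) ε₀) := by rw [hξeq2]; linarith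
      exact lt_of_lt_of_le h1 (le_trans (min_le_right _ _) (min_le_left _ _))
    have hηε₂ : |η| < ε₂ :=
      lt_of_lt_of_le hηε (le_trans (min_le_left _ _) (min_le_right _ _))
    have hηε₀ : |η| < ε₀/2 := lt_of_lt_of_le hηε (min_le_right _ _)
    have hxne : -x ≠ 0 := ne_of_gt hx'
    have ht' : t = 1 + η * Real.exp (-(h (-x))^(-p)) := by
      have hμeq : η * Real.exp (-(h (-x))^(-p)) = t - 1 := by
        rw [hηdef, div_mul_eq_mul_div, div_eq_iff hxne]
        linear_combination (t-1)*hheq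
      linarith only [hμeq]
    obtain ⟨z', hz'eq, hz'l, hz'u, hz'st, hz'b⟩ := hcore2 (h (-x)) η t hξpos hξδ₂ hηε₂ ht'
    rw [hheq] at hz'eq
    have hzeq' : (-z') + t * g (-z') = x := by linarith [hz'eq]
    rw [hderiv2] at hz'st
    have hz'pos : 0 < z' := lt_of_lt_of_le (by linarith) hz'l
    have hz'δ₀ : z' < δ₀ := by linarith
    have hexple1 : Real.exp (-(h (-x))^(-p)) ≤ 1 :=
      Real.exp_le_one_iff.2 (neg_nonpos.2 (Real.rpow_pos_of_pos hξpos _).le)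
    have htb : |t-1| < ε₀ := by
      have h1 : t-1 = η * Real.exp (-(h (-x))^(-p)) := by rw [ht']; ring
      have h2 : |t-1| ≤ |η| := by
        rw [h1, abs_mul]
        calc |η| * |Real.exp (-(h (-x))^(-p))| ≤ |η| * 1 := by
              apply mul_le_mul_of_nonneg_left _ (abs_nonneg η)
              rw [abs_of_pos (Real.exp_pos _)]; exact hexple1
          _ = |η| := mul_one _
      linarith
    have htba := abs_lt.1 htb
    have hyval : ym t x = -z' := by
      rcases le_or_gt t 1 with hle|hlt
      · exact hym' t x (-z') (by linarith) hle hzeq'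
          (by rw [abs_neg, abs_of_pos hz'pos]; exact hz'δ₀)
      · exact hym t x (-z') hlt (by linarith) hzeq' (by linarith) (by linarith) hz'st
    rw [hyval]
    have habsξ : |ξ| = h (-x) := by
      rw [hξdef, abs_neg, abs_of_nonneg hh0]
    rw [habsξ, hξdef]
    have hflip : |-z' - (-h (-x)) * (1 + (Real.log p/p)*(h (-x))^p + (1/p)*(h (-x))^p*η)|
        = |z' - h (-x) * (1 + (Real.log p/p)*(h (-x))^p + (1/p)*(h (-x))^p*η)| := by
      rw [show -z' - (-h (-x)) * (1 + (Real.log p/p)*(h (-x))^p + (1/p)*(h (-x))^p*η)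
        = -(z' - h (-x) * (1 + (Real.log p/p)*(h (-x))^p + (1/p)*(h (-x))^p*η)) by ring,
        abs_neg]
    rw [hflip]
    refine le_trans hz'b (mul_le_mul_of_nonneg_right (le_max_right _ _) ?_)
    have h5 : 0 < (h (-x))^(min (p+2) (2*p+1)) := Real.rpow_pos_of_pos hξpos _
    have h6 : 0 ≤ (h (-x))^(p+1) * η^2 :=
      mul_nonneg (Real.rpow_pos_of_pos hξpos _).le (sq_nonneg η)
    linarith
end
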